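/- arXiv:2504.19979 — 3 statements merged into one kernel-verified Lean document; each statement's English description precedes it below -/
import Mathlib

section
/- There exists a universal constant c > 0 such that for every n ≥ 2 and p ∈ (0,1), if A is an n×n random matrix with zero diagonal and i.i.d. Bernoulli(p) off-diagonal entries and A* = A/√((n−1)p), then P( ‖A*‖₂ ≤ 2√(np) ) ≥ 1 − exp( log n − np/c ). -/
open MeasureTheory ProbabilityTheory Filter Real Matrix

noncomputable section

/-- The Bernoulli(p) law on `ℝ`: mass `p` at `1` and mass `1-p` at `0`. -/
def bernoulliLaw (p : ℝ) : Measure ℝ :=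
  ENNReal.ofReal p • Measure.dirac (1 : ℝ) + ENNReal.ofReal (1 - p) • Measure.dirac (0 : ℝ)

/-- A random matrix `A` is an Erdős–Rényi adjacency matrix with edge probability `p`:
zero diagonal, off-diagonal entries i.i.d. Bernoulli(p). -/
def IsER {Ω : Type} [MeasurableSpace Ω] (μ : Measure Ω) {n : ℕ}
    (A : Ω → Fin n → Fin n → ℝ) (p : ℝ) : Prop :=
  (∀ ω i, A ω i i = 0) ∧
  (∀ i j : Fin n, i ≠ j → Measure.map (fun ω => A ω i j) μ = bernoulliLaw p) ∧
  iIndepFun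
    (fun (e : {q : Fin n × Fin n // q.1 ≠ q.2}) ω => A ω e.1.1 e.1.2) μ

/-- Rows of the random matrix `X` are i.i.d. with common law `ν`. -/
def IIDRows {Ω : Type} [MeasurableSpace Ω] (μ : Measure Ω) {n d : ℕ}
    (X : Ω → Fin n → Fin d → ℝ) (ν : Measure (Fin d → ℝ)) : Prop :=
  (∀ i, Measure.map (fun ω => X ω i) μ = ν) ∧
  iIndepFun (fun i ω => X ω i) μ

/-- Squared Frobenius norm of a matrix. -/
def frobSq {m n : Type*} [Fintype m] [Fintype n] (M : Matrix m n ℝ) : ℝ :=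
  ∑ i, ∑ j, (M i j) ^ 2

/-- ℓ₂ → ℓ₂ operator (spectral) norm of a matrix. -/
def opNorm {m n : Type*} [Fintype m] [Fintype n] [DecidableEq n] (M : Matrix m n ℝ) : ℝ :=
  ‖LinearMap.toContinuousLinearMap (Matrix.toEuclideanLin M)‖

/-- ℓ₁ norm of a vector. -/
def l1 {ι : Type*} [Fintype ι] (v : ι → ℝ) : ℝ := ∑ i, |v i|

/-- Squared ℓ₂ norm of a vector. -/
def l2sq {ι : Type*} [Fintype ι] (v : ι → ℝ) : ℝ := ∑ i, (v i) ^ 2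

/-- ℓ₂ norm of a vector. -/
def l2 {ι : Type*} [Fintype ι] (v : ι → ℝ) : ℝ := Real.sqrt (l2sq v)

/-- The ψ₂-norm of the law `ν` on `ℝ` is at most `K`. -/
def SubGaussianLaw (ν : Measure ℝ) (K : ℝ) : Prop :=
  ∫ x, Real.exp (x ^ 2 / K ^ 2) ∂ν ≤ 2

/-- A law on `ℝᵈ` is sub-Gaussian with constant `K`: every unit linear projection
has ψ₂-norm at most `K`. -/
def SubGaussianVecLaw {d : ℕ} (ν : Measure (Fin d → ℝ)) (K : ℝ) : Prop :=
  ∀ v : Fin d → ℝ, l2sq v ≤ 1 → ∫ x, Real.exp ((∑ j, v j * x j) ^ 2 / K ^ 2) ∂ν ≤ 2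

/-- Normalized adjacency matrix `A* = A / √((n-1) p)`. -/
def normAdj {n : ℕ} (A : Fin n → Fin n → ℝ) (p : ℝ) : Matrix (Fin n) (Fin n) ℝ :=
  Matrix.of fun i j => A i j / Real.sqrt (((n : ℝ) - 1) * p)

/-- Empirical edge density `p̂ = (∑_{i≠j} A_{ij}) / (n (n-1))`. -/
def empDensity {n : ℕ} (A : Fin n → Fin n → ℝ) : ℝ :=
  (∑ i, ∑ j, A i j) / ((n : ℝ) * ((n : ℝ) - 1))

/-- The design matrix `Z = (A* X , X)` with column blocks indexed by `Fin d ⊕ Fin d`. -/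
def Zmat {n d : ℕ} (A : Fin n → Fin n → ℝ) (p : ℝ) (X : Fin n → Fin d → ℝ) :
    Matrix (Fin n) (Fin d ⊕ Fin d) ℝ :=
  Matrix.of fun i => Sum.elim (fun j => ((normAdj A p) * Matrix.of X) i j) (fun j => X i j)



/-! ### Auxiliary lemmas -/

lemma aux_integrable_dirac {f : ℝ → ℝ} (hf : Measurable f) (a : ℝ) :
    Integrable f (Measure.dirac a) := by
  refine ⟨hf.aestronglyMeasurable, ?_⟩
  rw [HasFiniteIntegral, lintegral_dirac' a (by measurability)]
  exact ENNReal.coe_lt_top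

lemma aux_integrable_bern {p : ℝ} {f : ℝ → ℝ} (hf : Measurable f) :
    Integrable f (bernoulliLaw p) :=
  Integrable.add_measure
    ((aux_integrable_dirac hf 1).smul_measure ENNReal.ofReal_ne_top)
    ((aux_integrable_dirac hf 0).smul_measure ENNReal.ofReal_ne_top)

lemma aux_integral_bern {p : ℝ} (hp0 : 0 ≤ p) (hp1 : p ≤ 1) {f : ℝ → ℝ} (hf : Measurable f) :
    ∫ x, f x ∂(bernoulliLaw p) = p * f 1 + (1 - p) * f 0 := by
  unfold bernoulliLaw
  rw [integral_add_measure
      ((aux_integrable_dirac hf 1).smul_measure ENNReal.ofReal_ne_top)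
      ((aux_integrable_dirac hf 0).smul_measure ENNReal.ofReal_ne_top),
    integral_smul_measure, integral_smul_measure, integral_dirac, integral_dirac,
    ENNReal.toReal_ofReal hp0, ENNReal.toReal_ofReal (by linarith)]
  simp [smul_eq_mul]

lemma aux_bern_prob {p : ℝ} (hp0 : 0 ≤ p) (hp1 : p ≤ 1) :
    IsProbabilityMeasure (bernoulliLaw p) := by
  constructor
  unfold bernoulliLaw
  rw [Measure.add_apply, Measure.smul_apply, Measure.smul_apply]
  simp only [Measure.dirac_apply_of_mem (Set.mem_univ _), smul_eq_mul, mul_one]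
  rw [← ENNReal.ofReal_add hp0 (by linarith)]
  norm_num

lemma aux_bern_null {p : ℝ} :
    bernoulliLaw p {x : ℝ | ¬(x = 0 ∨ x = 1)} = 0 := by
  unfold bernoulliLaw
  rw [Measure.add_apply, Measure.smul_apply, Measure.smul_apply,
    Measure.dirac_apply, Measure.dirac_apply]
  rw [Set.indicator_of_notMem (by simp), Set.indicator_of_notMem (by simp)]
  simp

lemma aux_opNorm_le_sqrt {n : ℕ} (M : Matrix (Fin n) (Fin n) ℝ) (R C : ℝ)
    (hR0 : 0 ≤ R) (hC0 : 0 ≤ C)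
    (h0 : ∀ i j, 0 ≤ M i j) (hR : ∀ i, ∑ j, M i j ≤ R) (hC : ∀ j, ∑ i, M i j ≤ C) :
    opNorm M ≤ Real.sqrt (R * C) := by
  refine ContinuousLinearMap.opNorm_le_bound _ (Real.sqrt_nonneg _) fun x => ?_
  have hxn : ‖x‖ = Real.sqrt (∑ j, (x j) ^ 2) := by
    rw [EuclideanSpace.norm_eq]
    congr 1; apply Finset.sum_congr rfl; intro j _
    rw [Real.norm_eq_abs, sq_abs]
  have happ : ∀ i, (LinearMap.toContinuousLinearMap (Matrix.toEuclideanLin M)) x i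
      = ∑ j, M i j * x j := fun i => rfl
  have hMx : ‖(LinearMap.toContinuousLinearMap (Matrix.toEuclideanLin M)) x‖
      = Real.sqrt (∑ i, (∑ j, M i j * x j) ^ 2) := by
    rw [EuclideanSpace.norm_eq]
    congr 1; apply Finset.sum_congr rfl; intro i _
    rw [happ i, Real.norm_eq_abs, sq_abs]
  rw [hMx, hxn, ← Real.sqrt_mul (by positivity : (0:ℝ) ≤ R * C)]
  apply Real.sqrt_le_sqrt
  calc ∑ i, (∑ j, M i j * x j) ^ 2
      ≤ ∑ i, R * (∑ j, M i j * (x j) ^ 2) := by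
        refine Finset.sum_le_sum fun i _ => ?_
        have cs := Finset.sum_sq_le_sum_mul_sum_of_sq_eq_mul Finset.univ
          (r := fun j => M i j * x j) (f := fun j => M i j) (g := fun j => M i j * (x j) ^ 2)
          (fun j _ => h0 i j) (fun j _ => mul_nonneg (h0 i j) (sq_nonneg _))
          (fun j _ => by ring)
        refine le_trans cs ?_
        exact mul_le_mul_of_nonneg_right (hR i)
          (Finset.sum_nonneg fun j _ => mul_nonneg (h0 i j) (sq_nonneg _))
    _ = R * ∑ j, (∑ i, M i j) * (x j) ^ 2 := by
        rw [← Finset.mul_sum, Finset.sum_comm]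
        congr 1; apply Finset.sum_congr rfl; intro j _
        rw [Finset.sum_mul]
    _ ≤ R * ∑ j, C * (x j) ^ 2 := by
        refine mul_le_mul_of_nonneg_left (Finset.sum_le_sum fun j _ => ?_) hR0
        exact mul_le_mul_of_nonneg_right (hC j) (sq_nonneg _)
    _ = R * C * ∑ j, (x j) ^ 2 := by rw [← Finset.mul_sum]; ring

lemma aux_iIndepFun_ae_eq {Ω : Type} [MeasurableSpace Ω] {μ : Measure Ω}
    {ι : Type*} {f g : ι → Ω → ℝ}
    (hf : iIndepFun f μ) (h : ∀ i, f i =ᵐ[μ] g i) :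
    iIndepFun g μ := by
  rw [iIndepFun_iff_measure_inter_preimage_eq_mul] at hf ⊢
  intro S sets hsets
  have hall : ∀ᵐ ω ∂μ, ∀ i ∈ S, f i ω = g i ω :=
    (Filter.eventually_all_finset S).2 fun i _ => h i
  have h2 : μ (⋂ i ∈ S, g i ⁻¹' sets i) = μ (⋂ i ∈ S, f i ⁻¹' sets i) := by
    refine measure_congr (eventuallyEq_set.2 ?_)
    filter_upwards [hall] with ω hω
    simp only [Set.mem_iInter, Set.mem_preimage]
    exact ⟨fun hm i hi => by rw [hω i hi]; exact hm i hi,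
           fun hm i hi => by rw [← hω i hi]; exact hm i hi⟩
  rw [h2, hf S hsets]
  refine Finset.prod_congr rfl fun i hi => ?_
  refine measure_congr (eventuallyEq_set.2 ?_)
  filter_upwards [h i] with ω hω
  simp [Set.mem_preimage, hω]

lemma aux_chernoff {Ω : Type} [MeasurableSpace Ω] {μ : Measure Ω} [IsProbabilityMeasure μ]
    {ι : Type*} {Y : ι → Ω → ℝ}
    (hind : iIndepFun Y μ)
    (hmeas : ∀ e, Measurable (Y e)) {p : ℝ} (hp0 : 0 ≤ p) (hp1 : p ≤ 1)
    (hlaw : ∀ e, Measure.map (Y e) μ = bernoulliLaw p) (s : Finset ι) (K : ℝ) :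
    (μ {ω | K ≤ ∑ e ∈ s, Y e ω}).toReal ≤
      Real.exp (-(Real.log 2) * K) * (1 + p) ^ s.card := by
  set t := Real.log 2 with ht_def
  have ht : 0 ≤ t := Real.log_nonneg one_le_two
  have hexpm : Measurable fun x : ℝ => Real.exp (t * x) :=
    (Real.continuous_exp.comp (continuous_const.mul continuous_id)).measurable
  have hint : ∀ e, Integrable (fun ω => Real.exp (t * Y e ω)) μ := by
    intro e
    have hg : AEStronglyMeasurable (fun x => Real.exp (t * x)) (Measure.map (Y e) μ) :=
      hexpm.aestronglyMeasurable
    refine (integrable_map_measure hg (hmeas e).aemeasurable).mp ?_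
    rw [hlaw e]
    exact aux_integrable_bern hexpm
  have hmgf : ∀ e, mgf (Y e) μ t = 1 + p := by
    intro e
    have h1 : mgf (Y e) μ t = ∫ x, Real.exp (t * x) ∂(Measure.map (Y e) μ) := by
      rw [integral_map (hmeas e).aemeasurable hexpm.aestronglyMeasurable]
      rfl
    rw [h1, hlaw e, aux_integral_bern hp0 hp1 hexpm]
    rw [mul_one, mul_zero, Real.exp_zero, ht_def, Real.exp_log two_pos]
    ring
  have hsum_int : Integrable (fun ω => Real.exp (t * (∑ e ∈ s, Y e) ω)) μ :=
    hind.integrable_exp_mul_sum hmeas fun e _ => hint e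
  have hch := measure_ge_le_exp_mul_mgf (X := ∑ e ∈ s, Y e) (μ := μ) K ht hsum_int
  rw [hind.mgf_sum hmeas s] at hch
  have hset : {ω | K ≤ (∑ e ∈ s, Y e) ω} = {ω | K ≤ ∑ e ∈ s, Y e ω} := by
    ext ω; simp [Finset.sum_apply]
  rw [hset] at hch
  refine hch.trans ?_
  rw [Finset.prod_congr rfl fun e _ => hmgf e, Finset.prod_const]

lemma aux_row_sum {n : ℕ} (i : Fin n) (f : Fin n → ℝ) :
    ∑ e ∈ Finset.univ.filter (fun e : {q : Fin n × Fin n // q.1 ≠ q.2} => e.1.1 = i), f e.1.2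
      = ∑ j ∈ Finset.univ.erase i, f j := by
  refine Finset.sum_bij' (fun e _ => e.1.2) (fun j hj => ⟨(i, j), ?_⟩) ?_ ?_ ?_ ?_ ?_
  · simp only [Finset.mem_erase] at hj
    simpa using (Ne.symm hj.1)
  · intro e he
    simp only [Finset.mem_filter, Finset.mem_univ, true_and] at he
    simp only [Finset.mem_erase, Finset.mem_univ, and_true]
    rw [← he]; exact (Ne.symm e.2)
  · intro j hj
    simp
  · intro e he
    simp only [Finset.mem_filter, Finset.mem_univ, true_and] at he
    ext
    · simp [he]
    · simp
  · intro j hj; rfl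
  · intro e he; rfl

lemma aux_col_sum {n : ℕ} (j : Fin n) (f : Fin n → ℝ) :
    ∑ e ∈ Finset.univ.filter (fun e : {q : Fin n × Fin n // q.1 ≠ q.2} => e.1.2 = j), f e.1.1
      = ∑ i ∈ Finset.univ.erase j, f i := by
  refine Finset.sum_bij' (fun e _ => e.1.1) (fun i hi => ⟨(i, j), ?_⟩) ?_ ?_ ?_ ?_ ?_
  · simp only [Finset.mem_erase] at hi
    simpa using hi.1
  · intro e he
    simp only [Finset.mem_filter, Finset.mem_univ, true_and] at he
    simp only [Finset.mem_erase, Finset.mem_univ, and_true]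
    rw [← he]; exact e.2
  · intro i hi
    simp
  · intro e he
    simp only [Finset.mem_filter, Finset.mem_univ, true_and] at he
    ext
    · simp
    · simp [he]
  · intro i hi; rfl
  · intro e he; rfl

lemma aux_row_card {n : ℕ} (i : Fin n) :
    ((Finset.univ.filter (fun e : {q : Fin n × Fin n // q.1 ≠ q.2} => e.1.1 = i)).card : ℝ)
      = (n : ℝ) - 1 := by
  have h := aux_row_sum i (fun _ => (1 : ℝ))
  simp only [Finset.sum_const, nsmul_eq_mul, mul_one] at h
  rw [h]
  rcases Nat.eq_zero_or_pos n with h0 | h0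
  · exact absurd i.2 (by omega)
  · rw [Finset.card_erase_of_mem (Finset.mem_univ i), Finset.card_univ, Fintype.card_fin]
    rw [Nat.cast_sub h0]; norm_num

lemma aux_col_card {n : ℕ} (j : Fin n) :
    ((Finset.univ.filter (fun e : {q : Fin n × Fin n // q.1 ≠ q.2} => e.1.2 = j)).card : ℝ)
      = (n : ℝ) - 1 := by
  have h := aux_col_sum j (fun _ => (1 : ℝ))
  simp only [Finset.sum_const, nsmul_eq_mul, mul_one] at h
  rw [h]
  rcases Nat.eq_zero_or_pos n with h0 | h0
  · exact absurd j.2 (by omega)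
  · rw [Finset.card_erase_of_mem (Finset.mem_univ j), Finset.card_univ, Fintype.card_fin]
    rw [Nat.cast_sub h0]; norm_num

set_option maxHeartbeats 1000000 in
/-- operator norm bound for the normalized ER adjacency matrix. -/
theorem stmt6 :
    ∃ c : ℝ, 0 < c ∧
      ∀ (n : ℕ), 2 ≤ n → ∀ (p : ℝ), p ∈ Set.Ioo (0 : ℝ) 1 →
      ∀ (Ω : Type) (_ : MeasurableSpace Ω) (μ : Measure Ω), IsProbabilityMeasure μ →
      ∀ (A : Ω → Fin n → Fin n → ℝ), IsER μ A p →
      ENNReal.ofReal (1 - Real.exp (Real.log n - (n : ℝ) * p / c)) ≤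
        μ {ω | opNorm (normAdj (A ω) p) ≤ 2 * Real.sqrt ((n : ℝ) * p)} := by
  refine ⟨24, by norm_num, ?_⟩
  intro n hn p hp Ω mΩ μ hμ A hER
  obtain ⟨hdiag, hlaw, hind⟩ := hER
  have hp0 : 0 < p := hp.1
  have hp1 : p < 1 := hp.2
  have hn2 : (2:ℝ) ≤ (n:ℝ) := by exact_mod_cast hn
  have hnpos : (0:ℝ) < n := by linarith
  have hl2 : (0.6931471803 : ℝ) < Real.log 2 := Real.log_two_gt_d9
  set l2 := Real.log 2 with hl2def
  have hl2pos : 0 < l2 := by linarith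
  set K : ℝ := 2 * p * Real.sqrt ((n:ℝ) * ((n:ℝ) - 1)) with hKdef
  set r : ℝ := Real.exp (Real.log n - (n:ℝ) * p / 24) with hrdef
  have hr_eq : r = (n:ℝ) * Real.exp (-((n:ℝ)*p/24)) := by
    rw [hrdef, sub_eq_add_neg, Real.exp_add, Real.exp_log hnpos]
  by_cases hcase : (n:ℝ) * p ≤ 24 * l2
  · -- trivial case : the claimed probability lower bound is nonpositive
    have hhalf : Real.exp (-l2) = 1/2 := by
      rw [Real.exp_neg, hl2def, Real.exp_log two_pos]
      norm_num
    have he : Real.exp (-l2) ≤ Real.exp (-((n:ℝ)*p/24)) := by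
      apply Real.exp_le_exp.2; linarith
    have h1 : (1:ℝ) ≤ r := by
      rw [hr_eq]
      nlinarith [Real.exp_pos (-((n:ℝ)*p/24))]
    rw [ENNReal.ofReal_of_nonpos (by linarith)]
    exact zero_le
  push_neg at hcase
  have hn1 : (1:ℝ) ≤ (n:ℝ) - 1 := by linarith
  have hKpos : 0 < K := by
    rw [hKdef]
    have hs0 : 0 < Real.sqrt ((n:ℝ) * ((n:ℝ)-1)) := Real.sqrt_pos.2 (by nlinarith)
    nlinarith
  set s : ℝ := Real.sqrt (((n:ℝ) - 1) * p) with hsdef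
  have hs : 0 < s := Real.sqrt_pos.2 (by nlinarith)
  -- measurable modification of the entries
  have hbp : IsProbabilityMeasure (bernoulliLaw p) := aux_bern_prob hp0.le hp1.le
  have hae : ∀ e : {q : Fin n × Fin n // q.1 ≠ q.2}, AEMeasurable (fun ω => A ω e.1.1 e.1.2) μ := by
    intro e
    apply aemeasurable_of_map_neZero
    refine ⟨?_⟩
    rw [hlaw e.1.1 e.1.2 e.2]
    intro h0
    have := hbp.measure_univ
    rw [h0] at this
    simp at this
  set g : {q : Fin n × Fin n // q.1 ≠ q.2} → Ω → ℝ := fun e => (hae e).mk _ with hgdef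
  have hgm : ∀ e, Measurable (g e) := fun e => (hae e).measurable_mk
  have hge : ∀ e, (fun ω => A ω e.1.1 e.1.2) =ᵐ[μ] g e := fun e => (hae e).ae_eq_mk
  have hglaw : ∀ e, Measure.map (g e) μ = bernoulliLaw p := fun e => by
    rw [← Measure.map_congr (hge e), hlaw e.1.1 e.1.2 e.2]
  have hgind : iIndepFun g μ := aux_iIndepFun_ae_eq hind hge
  -- bad events
  set Bad0 : Set Ω := {ω | ¬ ∀ i j : Fin n, i ≠ j → (A ω i j = 0 ∨ A ω i j = 1)} with hB0
  set BadR : Fin n → Set Ω := fun i => {ω | K < ∑ j, A ω i j} with hBR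
  set BadC : Fin n → Set Ω := fun j => {ω | K < ∑ i, A ω i j} with hBC
  set b2 : ℝ := Real.exp (p * ((n:ℝ)-1) - l2 * K) with hb2
  -- the non-{0,1} event is null
  have hBad0 : μ Bad0 = 0 := by
    have hsub : Bad0 ⊆ ⋃ e : {q : Fin n × Fin n // q.1 ≠ q.2},
        (fun ω => A ω e.1.1 e.1.2) ⁻¹' {x : ℝ | ¬(x = 0 ∨ x = 1)} := by
      intro ω hω
      simp only [hB0, Set.mem_setOf_eq] at hω
      push_neg at hω
      obtain ⟨i, j, hij, h1, h2⟩ := hω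
      exact Set.mem_iUnion.2 ⟨⟨(i,j), hij⟩, by simp [h1, h2]⟩
    have hz : ∀ e : {q : Fin n × Fin n // q.1 ≠ q.2},
        μ ((fun ω => A ω e.1.1 e.1.2) ⁻¹' {x : ℝ | ¬(x = 0 ∨ x = 1)}) = 0 := by
      intro e
      have hC : MeasurableSet {x : ℝ | ¬(x = 0 ∨ x = 1)} := by
        have he : {x : ℝ | ¬(x = 0 ∨ x = 1)} = (({0, 1} : Set ℝ))ᶜ := by
          ext x; simp [Set.mem_insert_iff]
        rw [he]
        exact (((Set.finite_singleton (1:ℝ)).insert 0).measurableSet).compl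
      rw [← Measure.map_apply_of_aemeasurable (hae e) hC, hlaw e.1.1 e.1.2 e.2]
      exact aux_bern_null
    refine le_antisymm ?_ zero_le
    refine le_trans (measure_mono hsub) (le_trans (measure_iUnion_le _) ?_)
    rw [tsum_congr hz, tsum_zero]
  -- Chernoff bound for each row
  have hrowbound : ∀ i : Fin n, μ (BadR i) ≤ ENNReal.ofReal b2 := by
    intro i
    set si := Finset.univ.filter
      (fun e : {q : Fin n × Fin n // q.1 ≠ q.2} => e.1.1 = i) with hsi
    have hsum_eq : ∀ ω, ∑ e ∈ si, A ω e.1.1 e.1.2 = ∑ j, A ω i j := by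
      intro ω
      calc ∑ e ∈ si, A ω e.1.1 e.1.2 = ∑ e ∈ si, A ω i e.1.2 :=
            Finset.sum_congr rfl fun e he => by
              rw [(Finset.mem_filter.1 he).2]
        _ = ∑ j ∈ Finset.univ.erase i, A ω i j := aux_row_sum i (fun j => A ω i j)
        _ = ∑ j, A ω i j := Finset.sum_erase _ (hdiag ω i)
    have hsub : BadR i ⊆ {ω | K ≤ ∑ e ∈ si, A ω e.1.1 e.1.2} := by
      intro ω hω
      simp only [hBR, Set.mem_setOf_eq] at hω
      simp only [Set.mem_setOf_eq, hsum_eq ω]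
      exact hω.le
    have hmeq : μ {ω | K ≤ ∑ e ∈ si, A ω e.1.1 e.1.2} = μ {ω | K ≤ ∑ e ∈ si, g e ω} := by
      refine measure_congr (eventuallyEq_set.2 ?_)
      have hall : ∀ᵐ ω ∂μ, ∀ e ∈ si, A ω e.1.1 e.1.2 = g e ω :=
        (Filter.eventually_all_finset si).2 fun e _ => hge e
      filter_upwards [hall] with ω hω
      rw [Finset.sum_congr rfl hω]
    have hcc := aux_chernoff hgind hgm hp0.le hp1.le hglaw si K
    have hb : Real.exp (-l2 * K) * (1 + p) ^ si.card ≤ b2 := by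
      have hc : (si.card : ℝ) = (n:ℝ) - 1 := aux_row_card i
      have h1p : (1 + p) ^ si.card ≤ Real.exp (p * si.card) := by
        calc (1 + p) ^ si.card ≤ (Real.exp p) ^ si.card := by
              apply pow_le_pow_left₀ (by linarith)
              linarith [Real.add_one_le_exp p]
          _ = Real.exp (p * si.card) := by
              rw [← Real.exp_nat_mul, mul_comm]
      calc Real.exp (-l2*K) * (1+p)^si.card
          ≤ Real.exp (-l2*K) * Real.exp (p * si.card) :=
            mul_le_mul_of_nonneg_left h1p (Real.exp_nonneg _)
        _ = Real.exp (p * si.card - l2 * K) := by rw [← Real.exp_add]; ring_nf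
        _ = b2 := by rw [hb2, hc]
    calc μ (BadR i) ≤ μ {ω | K ≤ ∑ e ∈ si, A ω e.1.1 e.1.2} := measure_mono hsub
      _ = μ {ω | K ≤ ∑ e ∈ si, g e ω} := hmeq
      _ ≤ ENNReal.ofReal (Real.exp (-l2 * K) * (1 + p) ^ si.card) :=
          (ENNReal.le_ofReal_iff_toReal_le (measure_ne_top μ _) (by positivity)).2 hcc
      _ ≤ ENNReal.ofReal b2 := ENNReal.ofReal_le_ofReal hb
  -- Chernoff bound for each column
  have hcolbound : ∀ j : Fin n, μ (BadC j) ≤ ENNReal.ofReal b2 := by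
    intro j
    set sj := Finset.univ.filter
      (fun e : {q : Fin n × Fin n // q.1 ≠ q.2} => e.1.2 = j) with hsj
    have hsum_eq : ∀ ω, ∑ e ∈ sj, A ω e.1.1 e.1.2 = ∑ i, A ω i j := by
      intro ω
      calc ∑ e ∈ sj, A ω e.1.1 e.1.2 = ∑ e ∈ sj, A ω e.1.1 j :=
            Finset.sum_congr rfl fun e he => by
              rw [(Finset.mem_filter.1 he).2]
        _ = ∑ i ∈ Finset.univ.erase j, A ω i j := aux_col_sum j (fun i => A ω i j)
        _ = ∑ i, A ω i j := Finset.sum_erase _ (hdiag ω j)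
    have hsub : BadC j ⊆ {ω | K ≤ ∑ e ∈ sj, A ω e.1.1 e.1.2} := by
      intro ω hω
      simp only [hBC, Set.mem_setOf_eq] at hω
      simp only [Set.mem_setOf_eq, hsum_eq ω]
      exact hω.le
    have hmeq : μ {ω | K ≤ ∑ e ∈ sj, A ω e.1.1 e.1.2} = μ {ω | K ≤ ∑ e ∈ sj, g e ω} := by
      refine measure_congr (eventuallyEq_set.2 ?_)
      have hall : ∀ᵐ ω ∂μ, ∀ e ∈ sj, A ω e.1.1 e.1.2 = g e ω :=
        (Filter.eventually_all_finset sj).2 fun e _ => hge e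
      filter_upwards [hall] with ω hω
      rw [Finset.sum_congr rfl hω]
    have hcc := aux_chernoff hgind hgm hp0.le hp1.le hglaw sj K
    have hb : Real.exp (-l2 * K) * (1 + p) ^ sj.card ≤ b2 := by
      have hc : (sj.card : ℝ) = (n:ℝ) - 1 := aux_col_card j
      have h1p : (1 + p) ^ sj.card ≤ Real.exp (p * sj.card) := by
        calc (1 + p) ^ sj.card ≤ (Real.exp p) ^ sj.card := by
              apply pow_le_pow_left₀ (by linarith)
              linarith [Real.add_one_le_exp p]
          _ = Real.exp (p * sj.card) := by
              rw [← Real.exp_nat_mul, mul_comm]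
      calc Real.exp (-l2*K) * (1+p)^sj.card
          ≤ Real.exp (-l2*K) * Real.exp (p * sj.card) :=
            mul_le_mul_of_nonneg_left h1p (Real.exp_nonneg _)
        _ = Real.exp (p * sj.card - l2 * K) := by rw [← Real.exp_add]; ring_nf
        _ = b2 := by rw [hb2, hc]
    calc μ (BadC j) ≤ μ {ω | K ≤ ∑ e ∈ sj, A ω e.1.1 e.1.2} := measure_mono hsub
      _ = μ {ω | K ≤ ∑ e ∈ sj, g e ω} := hmeq
      _ ≤ ENNReal.ofReal (Real.exp (-l2 * K) * (1 + p) ^ sj.card) :=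
          (ENNReal.le_ofReal_iff_toReal_le (measure_ne_top μ _) (by positivity)).2 hcc
      _ ≤ ENNReal.ofReal b2 := ENNReal.ofReal_le_ofReal hb
  -- deterministic bound on the good event
  have hdet : ∀ ω, ω ∉ Bad0 → (∀ i, ω ∉ BadR i) → (∀ j, ω ∉ BadC j) →
      opNorm (normAdj (A ω) p) ≤ 2 * Real.sqrt ((n:ℝ) * p) := by
    intro ω h01 hr hc
    simp only [hB0, Set.mem_setOf_eq, not_not] at h01
    have hnn : ∀ i j, 0 ≤ A ω i j := by
      intro i j
      by_cases hij : i = j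
      · rw [hij, hdiag ω j]
      · rcases h01 i j hij with h | h <;> rw [h] <;> norm_num
    have hM0 : ∀ i j, 0 ≤ normAdj (A ω) p i j := by
      intro i j
      show 0 ≤ A ω i j / Real.sqrt (((n:ℝ)-1) * p)
      exact div_nonneg (hnn i j) (Real.sqrt_nonneg _)
    have hrow' : ∀ i, ∑ j, normAdj (A ω) p i j ≤ K / s := by
      intro i
      have h1 : ∑ j, normAdj (A ω) p i j = (∑ j, A ω i j) / s := by
        rw [Finset.sum_div, hsdef]
        rfl
      rw [h1]
      have h2 := hr i
      simp only [hBR, Set.mem_setOf_eq, not_lt] at h2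
      gcongr
    have hcol' : ∀ j, ∑ i, normAdj (A ω) p i j ≤ K / s := by
      intro j
      have h1 : ∑ i, normAdj (A ω) p i j = (∑ i, A ω i j) / s := by
        rw [Finset.sum_div, hsdef]
        rfl
      rw [h1]
      have h2 := hc j
      simp only [hBC, Set.mem_setOf_eq, not_lt] at h2
      gcongr
    have hKs : 2 * Real.sqrt ((n:ℝ) * p) * s = K := by
      rw [hsdef, hKdef, mul_assoc,
        ← Real.sqrt_mul (by positivity : (0:ℝ) ≤ (n:ℝ) * p)]
      rw [show (n:ℝ) * p * (((n:ℝ) - 1) * p) = ((n:ℝ) * ((n:ℝ)-1)) * p^2 by ring]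
      rw [Real.sqrt_mul (by nlinarith : (0:ℝ) ≤ (n:ℝ) * ((n:ℝ)-1)) (p^2),
        Real.sqrt_sq hp0.le]
      ring
    have hKn : 0 ≤ K / s := div_nonneg hKpos.le hs.le
    have hop := aux_opNorm_le_sqrt (normAdj (A ω) p) (K/s) (K/s) hKn hKn hM0 hrow' hcol'
    rw [Real.sqrt_mul_self hKn] at hop
    have hKs' : K / s = 2 * Real.sqrt ((n:ℝ) * p) := by
      rw [← hKs, mul_div_cancel_right₀ _ hs.ne']
    rwa [hKs'] at hop
  -- numeric inequality
  have hKlow : 2 * p * ((n:ℝ) - 1) ≤ K := by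
    rw [hKdef]
    have h1 : (n:ℝ) - 1 ≤ Real.sqrt ((n:ℝ) * ((n:ℝ)-1)) := by
      have h2 := Real.sqrt_le_sqrt (show ((n:ℝ)-1)^2 ≤ (n:ℝ)*((n:ℝ)-1) by nlinarith)
      rwa [Real.sqrt_sq (by linarith)] at h2
    have h3 := mul_le_mul_of_nonneg_left h1 (show (0:ℝ) ≤ 2*p by linarith)
    linarith [h3]
  have hnum : (n:ℝ)*b2 + (n:ℝ)*b2 ≤ r := by
    rw [hb2, hr_eq]
    have key : 2 * Real.exp (p*((n:ℝ)-1) - l2*K) ≤ Real.exp (-((n:ℝ)*p/24)) := by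
      have h2 : (2:ℝ) = Real.exp l2 := by rw [hl2def, Real.exp_log two_pos]
      rw [h2, ← Real.exp_add]
      apply Real.exp_le_exp.2
      have hlK : l2 * (2*p*((n:ℝ)-1)) ≤ l2 * K := mul_le_mul_of_nonneg_left hKlow hl2pos.le
      have hplow : (n:ℝ)*p/2 ≤ p*((n:ℝ)-1) := by nlinarith
      have h3 : (2*l2-1) * ((n:ℝ)*p/2) ≤ (2*l2-1)*(p*((n:ℝ)-1)) :=
        mul_le_mul_of_nonneg_left hplow (by nlinarith)
      have hpos24 : (0:ℝ) < l2 - 13/24 := by linarith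
      have h4 : 24*l2*(l2-13/24) ≤ (n:ℝ)*p*(l2-13/24) :=
        mul_le_mul_of_nonneg_right hcase.le hpos24.le
      have h5 : 14*l2 ≤ 24*(l2*l2) := by nlinarith
      nlinarith [hlK, h3, h4, h5]
    have hmul := mul_le_mul_of_nonneg_left key hnpos.le
    nlinarith [hmul]
  -- union bound and conclusion
  set BadAll : Set Ω := Bad0 ∪ ((⋃ i, BadR i) ∪ (⋃ j, BadC j)) with hBA
  have hUR : μ (⋃ i, BadR i) ≤ (n : ENNReal) * ENNReal.ofReal b2 := by
    refine le_trans (measure_iUnion_fintype_le μ _) ?_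
    refine le_trans (Finset.sum_le_sum fun i _ => hrowbound i) ?_
    rw [Finset.sum_const, Finset.card_univ, Fintype.card_fin, nsmul_eq_mul]
  have hUC : μ (⋃ j, BadC j) ≤ (n : ENNReal) * ENNReal.ofReal b2 := by
    refine le_trans (measure_iUnion_fintype_le μ _) ?_
    refine le_trans (Finset.sum_le_sum fun j _ => hcolbound j) ?_
    rw [Finset.sum_const, Finset.card_univ, Fintype.card_fin, nsmul_eq_mul]
  have hBadAll : μ BadAll ≤ ENNReal.ofReal r := by
    calc μ BadAll ≤ μ Bad0 + μ ((⋃ i, BadR i) ∪ (⋃ j, BadC j)) := measure_union_le _ _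
      _ ≤ μ Bad0 + (μ (⋃ i, BadR i) + μ (⋃ j, BadC j)) := by
          gcongr
          exact measure_union_le _ _
      _ ≤ 0 + ((n : ENNReal) * ENNReal.ofReal b2 + (n : ENNReal) * ENNReal.ofReal b2) := by
          gcongr
          exact hBad0.le
      _ = ENNReal.ofReal ((n:ℝ)*b2 + (n:ℝ)*b2) := by
          rw [zero_add, ENNReal.ofReal_add (by positivity) (by positivity),
            ENNReal.ofReal_mul (by positivity), ENNReal.ofReal_natCast]
      _ ≤ ENNReal.ofReal r := ENNReal.ofReal_le_ofReal hnum
  have hcover : (1 : ENNReal) ≤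
      μ {ω | opNorm (normAdj (A ω) p) ≤ 2 * Real.sqrt ((n:ℝ)*p)} + μ BadAll := by
    have hsub : (Set.univ : Set Ω) ⊆
        {ω | opNorm (normAdj (A ω) p) ≤ 2 * Real.sqrt ((n:ℝ)*p)} ∪ BadAll := by
      intro ω _
      by_cases hb : ω ∈ BadAll
      · exact Or.inr hb
      · left
        simp only [hBA, Set.mem_union, Set.mem_iUnion, not_or, not_exists] at hb
        exact hdet ω hb.1 hb.2.1 hb.2.2
    calc (1 : ENNReal) = μ Set.univ := measure_univ.symm
      _ ≤ μ ({ω | opNorm (normAdj (A ω) p) ≤ 2 * Real.sqrt ((n:ℝ)*p)} ∪ BadAll) :=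
          measure_mono hsub
      _ ≤ _ + _ := measure_union_le _ _
  calc ENNReal.ofReal (1 - r) = 1 - ENNReal.ofReal r := by
        rw [ENNReal.ofReal_sub _ (Real.exp_nonneg _), ENNReal.ofReal_one]
    _ ≤ μ {ω | opNorm (normAdj (A ω) p) ≤ 2 * Real.sqrt ((n:ℝ)*p)} := by
        rw [tsub_le_iff_right]
        exact le_trans hcover (add_le_add_right hBadAll _)

end
end

section
/- There exists a universal constant c > 0 such that for every n ≥ 2 and p ∈ (0,1), if A is an n×n random matrix with zero diagonal and i.i.d. Bernoulli(p) off-diagonal entries and A* = A/√((n−1)p), then P( ‖A*ᵀA*‖₂ ≤ 4np ) ≥ 1 − exp( log n − np/c ). -/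
open MeasureTheory ProbabilityTheory Filter Real Matrix

noncomputable section

open Finset ENNReal

lemma my_integrable_dirac (f : ℝ → ℝ) (a : ℝ) : Integrable f (Measure.dirac a) := by
  refine (integrable_const (f a)).congr ?_
  rw [Filter.EventuallyEq, ae_dirac_eq]
  exact Filter.eventually_pure.2 rfl

lemma bern_ne_zero {p : ℝ} (hp : 0 < p) : bernoulliLaw p ≠ 0 := by
  intro h
  have h1 : bernoulliLaw p Set.univ = 0 := by rw [h]; simp
  simp only [bernoulliLaw, Measure.add_apply, Measure.smul_apply, smul_eq_mul,
    measure_univ, mul_one] at h1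
  rw [add_eq_zero] at h1
  have : ENNReal.ofReal p ≠ 0 := by simp [hp]
  exact this h1.1

lemma bern_compl {p : ℝ} : bernoulliLaw p ({0,1} : Set ℝ)ᶜ = 0 := by
  have hm : MeasurableSet (({0,1} : Set ℝ)ᶜ) :=
    ((Set.finite_singleton (1:ℝ)).insert 0).measurableSet.compl
  simp only [bernoulliLaw, Measure.add_apply, Measure.smul_apply, smul_eq_mul]
  rw [Measure.dirac_apply' _ hm, Measure.dirac_apply' _ hm]
  simp

lemma bern_integral {p : ℝ} (hp : 0 ≤ p) (hp1 : p ≤ 1) (f : ℝ → ℝ) :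
    ∫ x, f x ∂(bernoulliLaw p) = p * f 1 + (1 - p) * f 0 := by
  rw [bernoulliLaw, integral_add_measure, integral_smul_measure, integral_smul_measure,
    integral_dirac, integral_dirac]
  · rw [ENNReal.toReal_ofReal hp, ENNReal.toReal_ofReal (by linarith)]
    simp [smul_eq_mul]
  · exact (my_integrable_dirac f 1).smul_measure ENNReal.ofReal_ne_top
  · exact (my_integrable_dirac f 0).smul_measure ENNReal.ofReal_ne_top

lemma aemeasurable_of_map_bern {Ω : Type*} [MeasurableSpace Ω] {μ : Measure Ω} {f : Ω → ℝ}
    {p : ℝ} (hp : 0 < p) (h : Measure.map f μ = bernoulliLaw p) : AEMeasurable f μ := by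
  by_contra hm
  rw [Measure.map_of_not_aemeasurable hm] at h
  exact bern_ne_zero hp h.symm
lemma ae01 {Ω : Type*} [MeasurableSpace Ω] {μ : Measure Ω} {f : Ω → ℝ} {p : ℝ}
    (hf : Measurable f) (h : Measure.map f μ = bernoulliLaw p) :
    ∀ᵐ ω ∂μ, f ω = 0 ∨ f ω = 1 := by
  have hm : MeasurableSet (({0,1} : Set ℝ)ᶜ) :=
    ((Set.finite_singleton (1:ℝ)).insert 0).measurableSet.compl
  have : μ (f ⁻¹' ({0,1} : Set ℝ)ᶜ) = 0 := by
    rw [← Measure.map_apply hf hm, h]; exact bern_compl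
  refine measure_mono_null ?_ this
  intro ω hω
  have hω' : ¬ (f ω = 0 ∨ f ω = 1) := hω
  push_neg at hω'
  simp [Set.mem_preimage, hω'.1, hω'.2]

lemma iIndepFun_ae_eq {Ω ι : Type*} [MeasurableSpace Ω] {μ : Measure Ω}
    {f g : ι → Ω → ℝ} (h : iIndepFun f μ)
    (hfg : ∀ i, f i =ᵐ[μ] g i) :
    iIndepFun g μ := by
  rw [iIndepFun_iff_measure_inter_preimage_eq_mul] at h ⊢
  intro S sets hsets
  have key : ∀ i ∈ S, μ (g i ⁻¹' sets i) = μ (f i ⁻¹' sets i) := fun i _ =>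
    measure_congr (Filter.eventuallyEq_set.2 ((hfg i).mono fun ω hω => by
      simp [Set.mem_preimage, hω]))
  have h2 : μ (⋂ i ∈ S, g i ⁻¹' sets i) = μ (⋂ i ∈ S, f i ⁻¹' sets i) := by
    refine measure_congr (Filter.eventuallyEq_set.2 ?_)
    have : ∀ᵐ ω ∂μ, ∀ i ∈ S, f i ω = g i ω :=
      (ae_ball_iff S.countable_toSet).2 fun i _ => hfg i
    exact this.mono fun ω hω => by
      simp only [Set.mem_iInter, Set.mem_preimage]
      exact ⟨fun hh i hi => (hω i hi) ▸ hh i hi, fun hh i hi => (hω i hi).symm ▸ hh i hi⟩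
  rw [h2, h S hsets]
  exact (Finset.prod_congr rfl key).symm
lemma mgf_bern {Ω : Type*} [MeasurableSpace Ω] {μ : Measure Ω} {f : Ω → ℝ} {p t : ℝ}
    (hp : 0 ≤ p) (hp1 : p ≤ 1) (hf : Measurable f) (h : Measure.map f μ = bernoulliLaw p) :
    mgf f μ t = p * Real.exp t + (1 - p) := by
  have : mgf f μ t = ∫ x, Real.exp (t * x) ∂(Measure.map f μ) := by
    rw [integral_map hf.aemeasurable]
    · rfl
    · exact (Real.continuous_exp.comp (continuous_const.mul continuous_id)).aestronglyMeasurable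
  rw [this, h, bern_integral hp hp1]
  simp

lemma integrable_exp_sum {Ω ι : Type*} [MeasurableSpace Ω] {μ : Measure Ω}
    [IsProbabilityMeasure μ] {Y : ι → Ω → ℝ} (s : Finset ι) (t : ℝ) (ht : 0 ≤ t)
    (hmeas : ∀ i, Measurable (Y i)) (h01 : ∀ i ∈ s, ∀ᵐ ω ∂μ, Y i ω = 0 ∨ Y i ω = 1) :
    Integrable (fun ω => Real.exp (t * ∑ i ∈ s, Y i ω)) μ := by
  have hS : Measurable fun ω => ∑ i ∈ s, Y i ω := Finset.measurable_sum s fun i _ => hmeas i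
  refine (integrable_const (Real.exp (t * s.card))).mono' ?_ ?_
  · exact (Real.continuous_exp.comp (continuous_const.mul continuous_id)).measurable.comp hS
      |>.aestronglyMeasurable
  · have hall : ∀ᵐ ω ∂μ, ∀ i ∈ s, Y i ω = 0 ∨ Y i ω = 1 :=
      (ae_ball_iff s.countable_toSet).2 h01
    refine hall.mono fun ω hω => ?_
    rw [Real.norm_eq_abs, abs_of_pos (Real.exp_pos _), Real.exp_le_exp]
    have hb : ∑ i ∈ s, Y i ω ≤ (s.card : ℝ) := by
      calc ∑ i ∈ s, Y i ω ≤ ∑ _i ∈ s, (1:ℝ) :=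
        Finset.sum_le_sum fun i hi => by rcases hω i hi with h | h <;> simp [h]
      _ = s.card := by simp
    exact mul_le_mul_of_nonneg_left hb ht

/-- Chernoff bound for a finite sum of independent Bernoulli(p) variables. -/
lemma chernoff {Ω ι : Type*} [MeasurableSpace Ω] {μ : Measure Ω} [IsProbabilityMeasure μ]
    {Y : ι → Ω → ℝ} {p : ℝ} (hp : 0 < p) (hp1 : p ≤ 1) (s : Finset ι)
    (hind : iIndepFun Y μ)
    (hmeas : ∀ i, Measurable (Y i))
    (hmap : ∀ i ∈ s, Measure.map (Y i) μ = bernoulliLaw p) :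
    μ {ω | 2 * (s.card : ℝ) * p ≤ ∑ i ∈ s, Y i ω} ≤
      ENNReal.ofReal (Real.exp (-(s.card : ℝ) * p / 3)) := by
  set t : ℝ := Real.log 2 with ht_def
  have ht : 0 ≤ t := Real.log_nonneg one_le_two
  have h01 : ∀ i ∈ s, ∀ᵐ ω ∂μ, Y i ω = 0 ∨ Y i ω = 1 := fun i hi => ae01 (hmeas i) (hmap i hi)
  have hint : Integrable (fun ω => Real.exp (t * ∑ i ∈ s, Y i ω)) μ :=
    integrable_exp_sum s t ht hmeas h01
  have hcher := measure_ge_le_exp_mul_mgf (X := fun ω => ∑ i ∈ s, Y i ω) (μ := μ)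
    (2 * (s.card : ℝ) * p) ht hint
  have hmgf : mgf (fun ω => ∑ i ∈ s, Y i ω) μ t = (p * Real.exp t + (1 - p)) ^ s.card := by
    have := hind.mgf_sum hmeas s (t := t)
    have heq : (fun ω => ∑ i ∈ s, Y i ω) = ∑ i ∈ s, Y i := by
      funext ω; simp [Finset.sum_apply]
    rw [heq, this]
    rw [Finset.prod_congr rfl fun i hi => mgf_bern hp.le hp1 (hmeas i) (hmap i hi)]
    simp
  -- numeric bound
  have hnum : Real.exp (-t * (2 * (s.card : ℝ) * p)) * (p * Real.exp t + (1 - p)) ^ s.card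
      ≤ Real.exp (-(s.card : ℝ) * p / 3) := by
    have hexp2 : Real.exp t = 2 := Real.exp_log (by norm_num)
    rw [hexp2]
    have h1p : p * 2 + (1 - p) = 1 + p := by ring
    rw [h1p]
    have hle : (1 + p) ^ s.card ≤ Real.exp ((s.card : ℝ) * p) := by
      calc (1 + p) ^ s.card ≤ (Real.exp p) ^ s.card := by
            apply pow_le_pow_left₀ (by linarith) _ _
            rw [add_comm]; exact Real.add_one_le_exp p
        _ = Real.exp ((s.card : ℝ) * p) := by rw [← Real.exp_nat_mul]
    calc Real.exp (-t * (2 * (s.card : ℝ) * p)) * (1 + p) ^ s.card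
        ≤ Real.exp (-t * (2 * (s.card : ℝ) * p)) * Real.exp ((s.card : ℝ) * p) := by
          exact mul_le_mul_of_nonneg_left hle (Real.exp_pos _).le
      _ = Real.exp ((s.card : ℝ) * p * (1 - 2 * t)) := by rw [← Real.exp_add]; ring_nf
      _ ≤ Real.exp (-(s.card : ℝ) * p / 3) := by
          rw [Real.exp_le_exp]
          have hlog : (2:ℝ)/3 ≤ t := by
            have := Real.log_two_gt_d9
            rw [ht_def]; linarith
          have hcard : (0:ℝ) ≤ (s.card : ℝ) * p := by positivity
          nlinarith
  have hfin : μ {ω | 2 * (s.card : ℝ) * p ≤ ∑ i ∈ s, Y i ω} ≠ ⊤ := measure_ne_top _ _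
  rw [← ENNReal.ofReal_toReal hfin]
  rw [hmgf] at hcher
  exact ENNReal.ofReal_le_ofReal (hcher.trans hnum)

lemma schur_bound {n : ℕ} (M : Matrix (Fin n) (Fin n) ℝ) (h0 : ∀ i j, 0 ≤ M i j)
    {R C : ℝ} (hR : 0 ≤ R) (hC : 0 ≤ C)
    (hrow : ∀ i, ∑ j, M i j ≤ R) (hcol : ∀ j, ∑ i, M i j ≤ C) :
    opNorm M ≤ Real.sqrt (R * C) := by
  refine ContinuousLinearMap.opNorm_le_bound _ (Real.sqrt_nonneg _) fun x => ?_
  rw [LinearMap.coe_toContinuousLinearMap']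
  set u : Fin n → ℝ := fun j => x j with hu
  have hx : x = (WithLp.equiv 2 (Fin n → ℝ)).symm u := rfl
  have happ : Matrix.toEuclideanLin M x = (WithLp.equiv 2 (Fin n → ℝ)).symm (M.mulVec u) := by
    rw [hx]; rfl
  rw [happ]
  have hnorm1 : ‖(WithLp.equiv 2 (Fin n → ℝ)).symm (M.mulVec u)‖
      = Real.sqrt (∑ i, (M.mulVec u i) ^ 2) := by
    rw [EuclideanSpace.norm_eq]
    congr 1
    refine Finset.sum_congr rfl fun i _ => ?_
    rw [Real.norm_eq_abs, sq_abs]; rfl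
  have hnormx : ‖x‖ = Real.sqrt (∑ j, (u j) ^ 2) := by
    rw [EuclideanSpace.norm_eq]
    congr 1
    refine Finset.sum_congr rfl fun j _ => ?_
    rw [Real.norm_eq_abs, sq_abs]
  rw [hnorm1, hnormx]
  have key : ∑ i, (M.mulVec u i) ^ 2 ≤ R * C * ∑ j, (u j) ^ 2 := by
    have step1 : ∀ i, (M.mulVec u i) ^ 2 ≤ R * ∑ j, M i j * (u j) ^ 2 := by
      intro i
      have hcs : (∑ j, M i j * u j) ^ 2 ≤ (∑ j, M i j) * ∑ j, M i j * (u j) ^ 2 :=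
        Finset.sum_sq_le_sum_mul_sum_of_sq_eq_mul Finset.univ
          (fun j _ => h0 i j) (fun j _ => mul_nonneg (h0 i j) (sq_nonneg _))
          (fun j _ => by ring)
      refine hcs.trans ?_
      exact mul_le_mul_of_nonneg_right (hrow i)
        (Finset.sum_nonneg fun j _ => mul_nonneg (h0 i j) (sq_nonneg _))
    calc ∑ i, (M.mulVec u i) ^ 2 ≤ ∑ i, R * ∑ j, M i j * (u j) ^ 2 :=
          Finset.sum_le_sum fun i _ => step1 i
      _ = R * ∑ j, (∑ i, M i j) * (u j) ^ 2 := by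
          rw [← Finset.mul_sum, Finset.sum_comm]
          congr 1
          refine Finset.sum_congr rfl fun j _ => ?_
          rw [Finset.sum_mul]
      _ ≤ R * ∑ j, C * (u j) ^ 2 := by
          refine mul_le_mul_of_nonneg_left (Finset.sum_le_sum fun j _ => ?_) hR
          exact mul_le_mul_of_nonneg_right (hcol j) (sq_nonneg _)
      _ = R * C * ∑ j, (u j) ^ 2 := by rw [← Finset.mul_sum]; ring
  calc Real.sqrt (∑ i, (M.mulVec u i) ^ 2) ≤ Real.sqrt (R * C * ∑ j, (u j) ^ 2) :=
        Real.sqrt_le_sqrt key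
    _ = Real.sqrt (R * C) * Real.sqrt (∑ j, (u j) ^ 2) :=
        Real.sqrt_mul (mul_nonneg hR hC) _

lemma key_det {n : ℕ} (hn : 2 ≤ n) {p : ℝ} (hp : 0 < p) (Bm : Fin n → Fin n → ℝ)
    (h0 : ∀ i j, 0 ≤ Bm i j)
    (hrow : ∀ i, ∑ j, Bm i j ≤ 2 * ((n:ℝ) - 1) * p)
    (hcol : ∀ j, ∑ i, Bm i j ≤ 2 * ((n:ℝ) - 1) * p) :
    opNorm ((normAdj Bm p)ᵀ * normAdj Bm p) ≤ 4 * ((n:ℝ) * p) := by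
  have hn1 : (1:ℝ) ≤ (n:ℝ) - 1 := by
    have : (2:ℝ) ≤ (n:ℝ) := by exact_mod_cast hn
    linarith
  set s2 : ℝ := ((n:ℝ) - 1) * p with hs2
  have hs2pos : 0 < s2 := mul_pos (by linarith) hp
  have hsq : Real.sqrt s2 * Real.sqrt s2 = s2 := Real.mul_self_sqrt hs2pos.le
  set M : Matrix (Fin n) (Fin n) ℝ := (normAdj Bm p)ᵀ * normAdj Bm p with hM
  have hMentry : ∀ j k, M j k = (∑ i, Bm i j * Bm i k) / s2 := by
    intro j k
    rw [hM, Matrix.mul_apply, Finset.sum_div]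
    refine Finset.sum_congr rfl fun i _ => ?_
    simp only [Matrix.transpose_apply, normAdj, Matrix.of_apply]
    rw [div_mul_div_comm, hsq]
  have hMnonneg : ∀ j k, 0 ≤ M j k := fun j k => by
    rw [hMentry]
    exact div_nonneg (Finset.sum_nonneg fun i _ => mul_nonneg (h0 i j) (h0 i k)) hs2pos.le
  set R : ℝ := 4 * ((n:ℝ) - 1) * p with hRdef
  have hRnonneg : 0 ≤ R := by positivity
  have hrowM : ∀ j, ∑ k, M j k ≤ R := by
    intro j
    have e1 : ∑ k, M j k = (∑ i, Bm i j * ∑ k, Bm i k) / s2 := by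
      simp_rw [hMentry, ← Finset.sum_div]
      congr 1
      rw [Finset.sum_comm]
      exact Finset.sum_congr rfl fun i _ => (Finset.mul_sum _ _ _).symm
    rw [e1]
    have hbound : ∑ i, Bm i j * ∑ k, Bm i k ≤ (2*((n:ℝ)-1)*p) * (2*((n:ℝ)-1)*p) :=
      calc ∑ i, Bm i j * ∑ k, Bm i k ≤ ∑ i, Bm i j * (2*((n:ℝ)-1)*p) :=
          Finset.sum_le_sum fun i _ => mul_le_mul_of_nonneg_left (hrow i) (h0 i j)
        _ = (∑ i, Bm i j) * (2*((n:ℝ)-1)*p) := by rw [← Finset.sum_mul]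
        _ ≤ (2*((n:ℝ)-1)*p) * (2*((n:ℝ)-1)*p) :=
          mul_le_mul_of_nonneg_right (hcol j) (by positivity)
    calc (∑ i, Bm i j * ∑ k, Bm i k) / s2 ≤ ((2*((n:ℝ)-1)*p) * (2*((n:ℝ)-1)*p)) / s2 := by
          gcongr
      _ = R := by rw [hRdef, hs2]; field_simp; ring
  have hsym : ∀ j k, M j k = M k j := by
    intro j k
    rw [hMentry, hMentry]
    congr 1
    exact Finset.sum_congr rfl fun i _ => mul_comm _ _
  have hcolM : ∀ j, ∑ k, M k j ≤ R := by
    intro j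
    calc ∑ k, M k j = ∑ k, M j k := Finset.sum_congr rfl fun k _ => (hsym j k).symm
      _ ≤ R := hrowM j
  calc opNorm M ≤ Real.sqrt (R * R) := schur_bound M hMnonneg hRnonneg hRnonneg hrowM hcolM
    _ = R := Real.sqrt_mul_self hRnonneg
    _ ≤ 4 * ((n:ℝ) * p) := by nlinarith [hp.le]

lemma sum_row_eq {n : ℕ} (i : Fin n) (F : {q : Fin n × Fin n // q.1 ≠ q.2} → ℝ)
    (v : Fin n → Fin n → ℝ) (hv : ∀ e : {q : Fin n × Fin n // q.1 ≠ q.2}, v e.1.1 e.1.2 = F e)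
    (hdiag : v i i = 0) :
    ∑ j, v i j =
      ∑ e ∈ Finset.univ.filter (fun e : {q : Fin n × Fin n // q.1 ≠ q.2} => e.1.1 = i), F e := by
  rw [← Finset.sum_erase_add Finset.univ _ (Finset.mem_univ i), hdiag, add_zero]
  refine Finset.sum_bij' (fun j hj => ⟨(i, j), (Finset.ne_of_mem_erase hj).symm⟩)
    (fun e _ => e.1.2) ?_ ?_ ?_ ?_ ?_
  · intro j hj
    simp
  · intro e he
    simp only [Finset.mem_filter, Finset.mem_univ, true_and] at he
    refine Finset.mem_erase.2 ⟨?_, Finset.mem_univ _⟩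
    intro h
    exact e.2 (he.trans h.symm)
  · intro j hj; rfl
  · intro e he
    simp only [Finset.mem_filter, Finset.mem_univ, true_and] at he
    exact Subtype.ext (Prod.ext he.symm rfl)
  · intro j hj
    have := hv ⟨(i, j), (Finset.ne_of_mem_erase hj).symm⟩
    simpa using this.symm ▸ rfl

lemma sum_col_eq {n : ℕ} (i : Fin n) (F : {q : Fin n × Fin n // q.1 ≠ q.2} → ℝ)
    (v : Fin n → Fin n → ℝ) (hv : ∀ e : {q : Fin n × Fin n // q.1 ≠ q.2}, v e.1.1 e.1.2 = F e)
    (hdiag : v i i = 0) :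
    ∑ j, v j i =
      ∑ e ∈ Finset.univ.filter (fun e : {q : Fin n × Fin n // q.1 ≠ q.2} => e.1.2 = i), F e := by
  rw [← Finset.sum_erase_add Finset.univ _ (Finset.mem_univ i), hdiag, add_zero]
  refine Finset.sum_bij' (fun j hj => ⟨(j, i), Finset.ne_of_mem_erase hj⟩)
    (fun e _ => e.1.1) ?_ ?_ ?_ ?_ ?_
  · intro j hj
    simp
  · intro e he
    simp only [Finset.mem_filter, Finset.mem_univ, true_and] at he
    refine Finset.mem_erase.2 ⟨?_, Finset.mem_univ _⟩
    intro h
    exact e.2 (h.trans he.symm)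
  · intro j hj; rfl
  · intro e he
    simp only [Finset.mem_filter, Finset.mem_univ, true_and] at he
    exact Subtype.ext (Prod.ext rfl he.symm)
  · intro j hj
    have := hv ⟨(j, i), Finset.ne_of_mem_erase hj⟩
    simpa using this.symm ▸ rfl

lemma card_rowset {n : ℕ} (i : Fin n) :
    (((Finset.univ.filter (fun e : {q : Fin n × Fin n // q.1 ≠ q.2} => e.1.1 = i))).card : ℝ)
      = (n:ℝ) - 1 := by
  have h := sum_row_eq i (fun _ => (1:ℝ)) (fun a b => if a = b then 0 else 1)
    (fun e => if_neg e.2) (if_pos rfl)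
  rw [Finset.sum_const] at h
  simp only [nsmul_eq_mul, mul_one] at h
  rw [← h]
  have : ∀ j : Fin n, (if i = j then (0:ℝ) else 1) = 1 - (if i = j then 1 else 0) := by
    intro j; split <;> norm_num
  rw [Finset.sum_congr rfl fun j _ => this j, Finset.sum_sub_distrib, Finset.sum_ite_eq]
  simp

lemma card_colset {n : ℕ} (i : Fin n) :
    (((Finset.univ.filter (fun e : {q : Fin n × Fin n // q.1 ≠ q.2} => e.1.2 = i))).card : ℝ)
      = (n:ℝ) - 1 := by
  have h := sum_col_eq i (fun _ => (1:ℝ)) (fun a b => if a = b then 0 else 1)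
    (fun e => if_neg e.2) (if_pos rfl)
  rw [Finset.sum_const] at h
  simp only [nsmul_eq_mul, mul_one] at h
  rw [← h]
  have : ∀ j : Fin n, (if j = i then (0:ℝ) else 1) = 1 - (if j = i then 1 else 0) := by
    intro j; split <;> norm_num
  rw [Finset.sum_congr rfl fun j _ => this j, Finset.sum_sub_distrib, Finset.sum_ite_eq']
  simp

/-- operator norm bound for `A*ᵀA*`. -/
theorem stmt8 :
    ∃ c : ℝ, 0 < c ∧
      ∀ (n : ℕ), 2 ≤ n → ∀ (p : ℝ), p ∈ Set.Ioo (0 : ℝ) 1 →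
      ∀ (Ω : Type) (_ : MeasurableSpace Ω) (μ : Measure Ω), IsProbabilityMeasure μ →
      ∀ (A : Ω → Fin n → Fin n → ℝ), IsER μ A p →
      ENNReal.ofReal (1 - Real.exp (Real.log n - (n : ℝ) * p / c)) ≤
        μ {ω | opNorm ((normAdj (A ω) p)ᵀ * normAdj (A ω) p) ≤ 4 * ((n : ℝ) * p)} := by
  refine ⟨12, by norm_num, ?_⟩
  intro n hn p hp Ω mΩ μ hμ A hER
  obtain ⟨hp0, hp1⟩ := hp
  obtain ⟨hdiag, hmap, hindep⟩ := hER
  set L : ℝ := Real.log n - (n : ℝ) * p / 12 with hL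
  by_cases hcase : 1 - Real.exp L ≤ 0
  · rw [ENNReal.ofReal_of_nonpos hcase]
    exact zero_le
  push_neg at hcase
  have hexpL : Real.exp L < 1 := by linarith
  have hLneg : L < 0 := by
    by_contra h
    push_neg at h
    have := Real.one_le_exp h
    linarith
  have hn2 : (2:ℝ) ≤ (n:ℝ) := by exact_mod_cast hn
  have hlog2 : Real.log 2 ≤ (n:ℝ) * p / 12 := by
    have h1 : Real.log 2 ≤ Real.log n := Real.log_le_log (by norm_num) hn2
    rw [hL] at hLneg
    linarith
  -- measurable modification
  set E := {q : Fin n × Fin n // q.1 ≠ q.2}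
  have haem : ∀ e : E, AEMeasurable (fun ω => A ω e.1.1 e.1.2) μ := fun e =>
    aemeasurable_of_map_bern hp0 (hmap e.1.1 e.1.2 e.2)
  set g : E → Ω → ℝ := fun e => (haem e).mk _ with hg
  have hgmeas : ∀ e, Measurable (g e) := fun e => (haem e).measurable_mk
  have hfg : ∀ e : E, (fun ω => A ω e.1.1 e.1.2) =ᵐ[μ] g e := fun e => (haem e).ae_eq_mk
  have hgind : iIndepFun g μ := iIndepFun_ae_eq hindep hfg
  have hgmap : ∀ e : E, Measure.map (g e) μ = bernoulliLaw p := fun e => by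
    rw [← Measure.map_congr (hfg e)]
    exact hmap e.1.1 e.1.2 e.2
  set r : ℝ := 2 * ((n:ℝ) - 1) * p with hr
  set rowset : Fin n → Finset E := fun i => Finset.univ.filter (fun e : E => e.1.1 = i) with hrowset
  set colset : Fin n → Finset E := fun i => Finset.univ.filter (fun e : E => e.1.2 = i) with hcolset
  set G : Set Ω := ⋂ i : Fin n,
      ({ω | ∑ e ∈ rowset i, g e ω ≤ r} ∩ {ω | ∑ e ∈ colset i, g e ω ≤ r}) with hG
  have hMsum : ∀ (s : Finset E), Measurable (fun ω => ∑ e ∈ s, g e ω) := fun s =>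
    Finset.measurable_sum s fun e _ => hgmeas e
  have hGmeas : MeasurableSet G :=
    MeasurableSet.iInter fun i =>
      ((measurableSet_le (hMsum _) measurable_const).inter
        (measurableSet_le (hMsum _) measurable_const))
  -- a.e. set
  have haeall : ∀ᵐ ω ∂μ, ∀ e : E, A ω e.1.1 e.1.2 = g e ω ∧ (g e ω = 0 ∨ g e ω = 1) :=
    ae_all_iff.2 fun e => (hfg e).and (ae01 (hgmeas e) (hgmap e))
  set N : Set Ω := toMeasurable μ {ω | ¬ ∀ e : E, A ω e.1.1 e.1.2 = g e ω ∧ (g e ω = 0 ∨ g e ω = 1)}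
    with hN
  have hNnull : μ N = 0 := by
    rw [hN, measure_toMeasurable]
    exact haeall
  have hNmeas : MeasurableSet N := measurableSet_toMeasurable _ _
  -- Chernoff bounds
  have hrowcard : ∀ i : Fin n, (((rowset i).card : ℝ)) = (n:ℝ) - 1 := fun i => card_rowset i
  have hcolcard : ∀ i : Fin n, (((colset i).card : ℝ)) = (n:ℝ) - 1 := fun i => card_colset i
  set ε6 : ℝ≥0∞ := ENNReal.ofReal (Real.exp (-((n:ℝ) * p) / 6)) with hε6
  have hcher : ∀ (s : Finset E), ((s.card : ℝ) = (n:ℝ) - 1) →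
      μ {ω | r ≤ ∑ e ∈ s, g e ω} ≤ ε6 := by
    intro s hcard
    have h := chernoff hp0 hp1.le s hgind hgmeas (fun e _ => hgmap e)
    rw [hcard] at h
    refine le_trans ?_ (h.trans ?_)
    · apply measure_mono
      intro ω hω
      simp only [Set.mem_setOf_eq] at hω ⊢
      rw [hr] at hω
      linarith
    · apply ENNReal.ofReal_le_ofReal
      rw [Real.exp_le_exp]
      rw [div_le_div_iff₀ (by norm_num) (by norm_num)]
      nlinarith
  -- union bound for Gᶜ
  have hGc : μ Gᶜ ≤ (n : ℝ≥0∞) * (2 * ε6) := by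
    have hsub : Gᶜ ⊆ ⋃ i ∈ (Finset.univ : Finset (Fin n)),
        ({ω | r ≤ ∑ e ∈ rowset i, g e ω} ∪ {ω | r ≤ ∑ e ∈ colset i, g e ω}) := by
      intro ω hω
      rw [hG, Set.compl_iInter] at hω
      obtain ⟨i, hi⟩ := Set.mem_iUnion.1 hω
      rw [Set.compl_inter] at hi
      refine Set.mem_biUnion (Finset.mem_univ i) ?_
      rcases hi with h | h
      · exact Or.inl (le_of_not_ge (by simpa using h))
      · exact Or.inr (le_of_not_ge (by simpa using h))
    calc μ Gᶜ ≤ ∑ i : Fin n,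
          μ ({ω | r ≤ ∑ e ∈ rowset i, g e ω} ∪ {ω | r ≤ ∑ e ∈ colset i, g e ω}) :=
        (measure_mono hsub).trans (measure_biUnion_finset_le _ _)
      _ ≤ ∑ _i : Fin n, (2 * ε6) := by
          refine Finset.sum_le_sum fun i _ => ?_
          refine (measure_union_le _ _).trans ?_
          have h1 := hcher (rowset i) (hrowcard i)
          have h2 := hcher (colset i) (hcolcard i)
          rw [two_mul]
          exact add_le_add h1 h2
      _ = (n : ℝ≥0∞) * (2 * ε6) := by
          rw [Finset.sum_const, Finset.card_univ, Fintype.card_fin, nsmul_eq_mul]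
  -- the good measurable set
  set Eset : Set Ω := Nᶜ ∩ G with hEset
  have hEmeas : MeasurableSet Eset := hNmeas.compl.inter hGmeas
  -- Eset is contained in the target set
  have hsubset : Eset ⊆
      {ω | opNorm ((normAdj (A ω) p)ᵀ * normAdj (A ω) p) ≤ 4 * ((n : ℝ) * p)} := by
    rintro ω ⟨hωN, hωG⟩
    have hpt : ∀ e : E, A ω e.1.1 e.1.2 = g e ω ∧ (g e ω = 0 ∨ g e ω = 1) := by
      by_contra h
      exact hωN (subset_toMeasurable _ _ h)
    have hGω : ∀ i : Fin n, (∑ e ∈ rowset i, g e ω ≤ r) ∧ (∑ e ∈ colset i, g e ω ≤ r) := by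
      intro i
      have := Set.mem_iInter.1 hωG i
      exact ⟨this.1, this.2⟩
    have h0 : ∀ i j, 0 ≤ A ω i j := by
      intro i j
      by_cases hij : i = j
      · rw [hij, hdiag ω j]
      · obtain ⟨he, h01⟩ := hpt ⟨(i, j), hij⟩
        rw [he]
        rcases h01 with h | h <;> rw [h] <;> norm_num
    have hveq : ∀ e : E, A ω e.1.1 e.1.2 = (fun e => g e ω) e := fun e => (hpt e).1
    have hrowsum : ∀ i, ∑ j, A ω i j ≤ r := by
      intro i
      rw [sum_row_eq i (fun e => g e ω) (A ω) hveq (hdiag ω i)]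
      exact (hGω i).1
    have hcolsum : ∀ i, ∑ j, A ω j i ≤ r := by
      intro i
      rw [sum_col_eq i (fun e => g e ω) (A ω) hveq (hdiag ω i)]
      exact (hGω i).2
    exact key_det hn hp0 (A ω) h0 hrowsum hcolsum
  -- final computation
  have hcompl : μ Esetᶜ ≤ ENNReal.ofReal (Real.exp L) := by
    have h1 : μ Esetᶜ ≤ μ N + μ Gᶜ := by
      rw [hEset, Set.compl_inter, compl_compl]
      exact measure_union_le _ _
    rw [hNnull, zero_add] at h1
    refine h1.trans (hGc.trans ?_)
    have hn0 : (0:ℝ) ≤ (n:ℝ) := by positivity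
    rw [hε6, ← ENNReal.ofReal_natCast, ← ENNReal.ofReal_ofNat,
      ← ENNReal.ofReal_mul (by norm_num), ← ENNReal.ofReal_mul hn0]
    apply ENNReal.ofReal_le_ofReal
    have hexpand : Real.exp L = (n:ℝ) * Real.exp (-((n:ℝ) * p) / 12) := by
      rw [hL, Real.exp_sub, Real.exp_log (by linarith), neg_div, Real.exp_neg, div_eq_mul_inv]
    rw [hexpand]
    have h2 : 2 * Real.exp (-((n:ℝ) * p) / 6) ≤ Real.exp (-((n:ℝ) * p) / 12) := by
      have : (2:ℝ) = Real.exp (Real.log 2) := (Real.exp_log (by norm_num)).symm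
      rw [this, ← Real.exp_add, Real.exp_le_exp]
      linarith
    exact mul_le_mul_of_nonneg_left h2 hn0
  calc ENNReal.ofReal (1 - Real.exp L)
      = 1 - ENNReal.ofReal (Real.exp L) := by
        rw [ENNReal.ofReal_sub _ (Real.exp_pos _).le, ENNReal.ofReal_one]
    _ ≤ 1 - μ Esetᶜ := tsub_le_tsub_left hcompl 1
    _ = μ Eset := by
        rw [← prob_compl_eq_one_sub hEmeas.compl, compl_compl]
    _ ≤ _ := measure_mono hsubset

end
end

section
/- There exists a universal constant C > 0 such that for every n ≥ 2 and p ∈ [1/n, 1) with np ≥ C, if A is an n×n random matrix with zero diagonal and i.i.d. Bernoulli(p) off-diagonal entries and A* = A/√((n−1)p), then E[ ‖A*ᵀA*‖_F² ] ≤ C (n + n²p²) and Var( ‖A*ᵀA*‖_F² ) ≤ C (n + n²p² + n³p⁴). -/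
open MeasureTheory ProbabilityTheory Filter Real Matrix

noncomputable section

/-! ### Auxiliary material for Statement 19 -/

namespace Stmt19Aux

/-! #### Purely algebraic/combinatorial helpers -/

lemma prod_insert_idem {α : Type*} [DecidableEq α] {v : α → ℝ}
    (hv : ∀ e, v e = 0 ∨ v e = 1) (a : α) (s : Finset α) :
    ∏ e ∈ insert a s, v e = v a * ∏ e ∈ s, v e := by
  by_cases h : a ∈ s
  · rw [Finset.insert_eq_self.2 h, ← Finset.mul_prod_erase s v h, ← mul_assoc]
    rcases hv a with h0 | h0 <;> rw [h0] <;> ring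
  · rw [Finset.prod_insert h]

lemma prod_union_idem {α : Type*} [DecidableEq α] {v : α → ℝ}
    (hv : ∀ e, v e = 0 ∨ v e = 1) (s t : Finset α) :
    ∏ e ∈ s ∪ t, v e = (∏ e ∈ s, v e) * ∏ e ∈ t, v e := by
  induction s using Finset.induction_on with
  | empty => simp
  | insert _ _ h ih =>
      rw [Finset.insert_union, prod_insert_idem hv, ih, prod_insert_idem hv, mul_assoc]

lemma sum_pow_card_pair {n : ℕ} {q : ℝ} (hq0 : 0 ≤ q) :
    ∑ x : Fin n, ∑ y : Fin n, q ^ ({x, y} : Finset (Fin n)).card ≤ n * q + n^2 * q^2 := by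
  have h1 : ∀ x : Fin n, ∑ y : Fin n, q ^ ({x, y} : Finset (Fin n)).card ≤ q + n * q^2 := by
    intro x
    have hterm : ∀ y : Fin n, q ^ ({x, y} : Finset (Fin n)).card
        = q^2 + if y = x then q - q^2 else 0 := by
      intro y
      by_cases h : y = x
      · subst h; simp
      · rw [Finset.card_insert_of_notMem (by simp [Ne.symm h]), Finset.card_singleton,
          if_neg h, add_zero]
    rw [Finset.sum_congr rfl fun y _ => hterm y, Finset.sum_add_distrib,
      Finset.sum_const, Finset.sum_ite_eq' Finset.univ x (fun _ => q - q^2)]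
    simp only [Finset.mem_univ, if_pos, Finset.card_univ, Fintype.card_fin, nsmul_eq_mul]
    nlinarith [sq_nonneg q]
  calc ∑ x : Fin n, ∑ y : Fin n, q ^ ({x, y} : Finset (Fin n)).card
      ≤ ∑ _x : Fin n, (q + n * q^2) := Finset.sum_le_sum fun x _ => h1 x
    _ = n * q + n^2 * q^2 := by
        rw [Finset.sum_const, Finset.card_univ, Fintype.card_fin, nsmul_eq_mul]; ring

/-- weight function for the decoupling bound -/
def wfun {n : ℕ} (p : ℝ) (C : Finset (Fin n)) (a b : Fin n) : ℝ :=
  (if a ∈ C then (1:ℝ) else 0) * (if b ∈ C then 1 else p) +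
  (if b ∈ C then (1:ℝ) else 0) * (if a ∈ C then 1 else p)

lemma wfun_nonneg {n : ℕ} {p : ℝ} (hp : 0 ≤ p) (C : Finset (Fin n)) (a b : Fin n) :
    0 ≤ wfun p C a b := by
  unfold wfun
  have h1 : (0:ℝ) ≤ if a ∈ C then (1:ℝ) else 0 := by positivity
  have h2 : (0:ℝ) ≤ if b ∈ C then (1:ℝ) else p := by split <;> simp [hp]
  have h3 : (0:ℝ) ≤ if b ∈ C then (1:ℝ) else 0 := by positivity
  have h4 : (0:ℝ) ≤ if a ∈ C then (1:ℝ) else p := by split <;> simp [hp]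
  positivity

lemma pow_le_wfun {n : ℕ} {p : ℝ} (hp0 : 0 ≤ p) {C : Finset (Fin n)} {a b : Fin n}
    (h : a ∈ C ∨ b ∈ C) :
    p ^ (if ({a, b} : Finset (Fin n)) ⊆ C then 0 else 1) ≤ wfun p C a b := by
  unfold wfun
  by_cases hsub : ({a, b} : Finset (Fin n)) ⊆ C
  · have ha : a ∈ C := hsub (Finset.mem_insert_self a {b})
    have hb : b ∈ C := hsub (by simp)
    rw [if_pos hsub]
    simp only [ha, hb, if_pos]
    norm_num
  · rw [if_neg hsub, pow_one]
    rcases h with ha | hb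
    · have hb : b ∉ C := fun hb => hsub (Finset.insert_subset ha (by simp [hb]))
      simp [ha, hb]
    · by_cases ha : a ∈ C
      · exact absurd (Finset.insert_subset ha (by simp [hb])) hsub
      · simp [ha, hb]

lemma sum_wfun_le {n : ℕ} {p : ℝ} (hp0 : 0 ≤ p) (hnp : 1 ≤ (n:ℝ) * p) {C : Finset (Fin n)}
    (hC : C.card ≤ 2) :
    ∑ a : Fin n, ∑ b : Fin n, wfun p C a b ≤ 12 * (n : ℝ) * p := by
  set u : Fin n → ℝ := fun a => if a ∈ C then (1:ℝ) else 0 with hu'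
  set v : Fin n → ℝ := fun a => if a ∈ C then (1:ℝ) else p with hv'
  have hu : ∑ a : Fin n, u a = C.card := by
    simp [hu', Finset.sum_ite_mem, Finset.univ_inter]
  have hC2 : (C.card : ℝ) ≤ 2 := by exact_mod_cast hC
  have hv : ∑ a : Fin n, v a ≤ 2 + (n:ℝ) * p := by
    have hle : ∀ a : Fin n, v a ≤ u a + p := by
      intro a; simp only [hu', hv']; split <;> simp [hp0]
    calc ∑ a : Fin n, v a ≤ ∑ a : Fin n, (u a + p) := Finset.sum_le_sum fun a _ => hle a
      _ = (C.card : ℝ) + (n:ℝ) * p := by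
          rw [Finset.sum_add_distrib, hu, Finset.sum_const, Finset.card_univ, Fintype.card_fin,
            nsmul_eq_mul]
      _ ≤ 2 + (n:ℝ) * p := by linarith
  have hunn : (0:ℝ) ≤ ∑ a : Fin n, u a := by rw [hu]; positivity
  have key : ∑ a : Fin n, ∑ b : Fin n, wfun p C a b
      = 2 * (∑ a : Fin n, u a) * (∑ a : Fin n, v a) := by
    have expand : ∀ a : Fin n, ∑ b : Fin n, wfun p C a b
        = u a * (∑ b : Fin n, v b) + (∑ b : Fin n, u b) * v a := by
      intro a
      unfold wfun
      rw [Finset.sum_add_distrib, ← Finset.mul_sum, ← Finset.sum_mul]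
    rw [Finset.sum_congr rfl fun a _ => expand a, Finset.sum_add_distrib,
      ← Finset.sum_mul, ← Finset.mul_sum]
    ring
  rw [key]
  have h2np : 2 + (n:ℝ) * p ≤ 3 * ((n:ℝ) * p) := by linarith
  calc 2 * (∑ a : Fin n, u a) * (∑ a : Fin n, v a)
      ≤ 2 * 2 * (3 * ((n:ℝ) * p)) := by
        apply mul_le_mul
        · apply mul_le_mul le_rfl (by rw [hu]; exact hC2) hunn (by norm_num)
        · calc ∑ a : Fin n, v a ≤ 2 + (n:ℝ)*p := hv
            _ ≤ 3 * ((n:ℝ)*p) := h2np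
        · apply Finset.sum_nonneg; intro a _
          simp only [hv']; split <;> simp [hp0]
        · positivity
    _ = 12 * (n:ℝ) * p := by ring

lemma card_union_ge {α : Type*} [DecidableEq α] (R C R' C' : Finset α)
    (hx : ((R ×ˢ C) ∩ (R' ×ˢ C')).Nonempty) :
    (R ×ˢ C).card + (if C' ⊆ C then 0 else 1) + (if R' ⊆ R then 0 else 1)
      ≤ ((R ×ˢ C) ∪ (R' ×ˢ C')).card := by
  obtain ⟨q, hq⟩ := hx
  rw [Finset.mem_inter, Finset.mem_product, Finset.mem_product] at hq
  obtain ⟨⟨hq1R, hq2C⟩, hq1R', hq2C'⟩ := hq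
  have hsplit : ((R ×ˢ C) ∪ (R' ×ˢ C')).card
      = (R ×ˢ C).card + ((R' ×ˢ C') \ (R ×ˢ C)).card := by
    rw [← Finset.card_union_of_disjoint Finset.disjoint_sdiff, Finset.union_sdiff_self_eq_union]
  rw [hsplit]
  have main : (if C' ⊆ C then 0 else 1) + (if R' ⊆ R then 0 else 1)
      ≤ ((R' ×ˢ C') \ (R ×ˢ C)).card := by
    by_cases hC : C' ⊆ C <;> by_cases hR : R' ⊆ R
    · rw [if_pos hC, if_pos hR]; omega
    · rw [if_pos hC, if_neg hR]
      obtain ⟨r₁, hr₁C', hr₁⟩ := Finset.not_subset.1 hR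
      have hmem : (r₁, q.2) ∈ (R' ×ˢ C') \ (R ×ˢ C) := by
        rw [Finset.mem_sdiff, Finset.mem_product, Finset.mem_product]
        exact ⟨⟨hr₁C', hq2C'⟩, fun h => hr₁ h.1⟩
      simpa using Finset.card_pos.2 ⟨_, hmem⟩
    · rw [if_neg hC, if_pos hR]
      obtain ⟨c₁, hc₁C', hc₁⟩ := Finset.not_subset.1 hC
      have hmem : (q.1, c₁) ∈ (R' ×ˢ C') \ (R ×ˢ C) := by
        rw [Finset.mem_sdiff, Finset.mem_product, Finset.mem_product]
        exact ⟨⟨hq1R', hc₁C'⟩, fun h => hc₁ h.2⟩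
      simpa using Finset.card_pos.2 ⟨_, hmem⟩
    · rw [if_neg hC, if_neg hR]
      obtain ⟨c₁, hc₁C', hc₁⟩ := Finset.not_subset.1 hC
      obtain ⟨r₁, hr₁C', hr₁⟩ := Finset.not_subset.1 hR
      have h1 : (q.1, c₁) ∈ (R' ×ˢ C') \ (R ×ˢ C) := by
        rw [Finset.mem_sdiff, Finset.mem_product, Finset.mem_product]
        exact ⟨⟨hq1R', hc₁C'⟩, fun h => hc₁ h.2⟩
      have h2 : (r₁, q.2) ∈ (R' ×ˢ C') \ (R ×ˢ C) := by
        rw [Finset.mem_sdiff, Finset.mem_product, Finset.mem_product]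
        exact ⟨⟨hr₁C', hq2C'⟩, fun h => hr₁ h.1⟩
      have hne : (q.1, c₁) ≠ (r₁, q.2) := by
        intro h
        apply hr₁
        have hfst : q.1 = r₁ := congrArg Prod.fst h
        rw [← hfst]
        exact hq1R
      have hsub : ({(q.1, c₁), (r₁, q.2)} : Finset (α × α)) ⊆ (R' ×ˢ C') \ (R ×ˢ C) := by
        intro x hx
        rcases Finset.mem_insert.1 hx with rfl | hx
        · exact h1
        · rw [Finset.mem_singleton.1 hx]; exact h2
      calc 1 + 1 = ({(q.1, c₁), (r₁, q.2)} : Finset (α × α)).card := by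
            rw [Finset.card_pair hne]
        _ ≤ _ := Finset.card_le_card hsub
  omega

/-! #### Probabilistic helpers -/

section Prob

variable {Ω : Type} [MeasurableSpace Ω] {μ : Measure Ω} [IsProbabilityMeasure μ]
  {n : ℕ} {A : Ω → Fin n → Fin n → ℝ} {p : ℝ}

lemma measA (hA : Measurable A) (i j : Fin n) : Measurable fun ω => A ω i j := by
  have h1 : Measurable fun g : Fin n → Fin n → ℝ => g i j :=
    (measurable_pi_apply j).comp (measurable_pi_apply i)
  exact h1.comp hA

omit [IsProbabilityMeasure μ] in
lemma ae_nice (hA : Measurable A) (hdiag : ∀ ω i, A ω i i = 0)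
    (hlaw : ∀ i j : Fin n, i ≠ j → Measure.map (fun ω => A ω i j) μ = bernoulliLaw p) :
    ∀ᵐ ω ∂μ, ∀ i j, A ω i j = 0 ∨ A ω i j = 1 := by
  rw [MeasureTheory.ae_all_iff]
  intro i
  rw [MeasureTheory.ae_all_iff]
  intro j
  by_cases hij : i = j
  · subst hij; filter_upwards with ω; exact Or.inl (hdiag ω i)
  · have hs : MeasurableSet ({0, 1} : Set ℝ) :=
      ((Set.finite_singleton (1:ℝ)).insert 0).measurableSet
    have hkey : μ ((fun ω => A ω i j) ⁻¹' ({0, 1} : Set ℝ)ᶜ) = 0 := by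
      rw [← Measure.map_apply (measA hA i j) hs.compl, hlaw i j hij]
      simp [bernoulliLaw, Measure.dirac_apply' _ hs.compl]
    rw [MeasureTheory.ae_iff]
    have hset : {ω | ¬(A ω i j = 0 ∨ A ω i j = 1)}
        = (fun ω => A ω i j) ⁻¹' ({0, 1} : Set ℝ)ᶜ := by
      ext ω
      simp only [Set.mem_setOf_eq, Set.mem_preimage, Set.mem_compl_iff, Set.mem_insert_iff,
        Set.mem_singleton_iff]
    rw [hset]
    exact hkey

lemma integral_bern {p : ℝ} (hp0 : 0 ≤ p) : ∫ x, x ∂(bernoulliLaw p) = p := by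
  have hd : ∀ a : ℝ, Integrable (id : ℝ → ℝ) (Measure.dirac a) := by
    intro a
    refine ⟨measurable_id.aestronglyMeasurable, ?_⟩
    simp [HasFiniteIntegral, lintegral_dirac]
  have h1 : Integrable (id : ℝ → ℝ) (ENNReal.ofReal p • Measure.dirac (1:ℝ)) :=
    (hd 1).smul_measure ENNReal.ofReal_ne_top
  have h2 : Integrable (id : ℝ → ℝ) (ENNReal.ofReal (1-p) • Measure.dirac (0:ℝ)) :=
    (hd 0).smul_measure ENNReal.ofReal_ne_top
  have hrw : ∫ x, x ∂(bernoulliLaw p) = ∫ x, (id : ℝ → ℝ) x ∂(bernoulliLaw p) := rfl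
  rw [hrw, bernoulliLaw, integral_add_measure h1 h2, integral_smul_measure, integral_smul_measure,
    integral_dirac, integral_dirac]
  simp [ENNReal.toReal_ofReal hp0]

omit [IsProbabilityMeasure μ] in
lemma expec_entry (hA : Measurable A) (hp0 : 0 ≤ p)
    (hlaw : ∀ i j : Fin n, i ≠ j → Measure.map (fun ω => A ω i j) μ = bernoulliLaw p)
    {i j : Fin n} (hij : i ≠ j) : ∫ ω, A ω i j ∂μ = p := by
  have hmap := integral_map (μ := μ) (f := fun x : ℝ => x) (φ := fun ω => A ω i j)
    (measA hA i j).aemeasurable measurable_id.aestronglyMeasurable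
  rw [hlaw i j hij] at hmap
  rw [← hmap, integral_bern hp0]

lemma integral_prod_edges (hA : Measurable A)
    (hind : iIndepFun
      (fun (e : {q : Fin n × Fin n // q.1 ≠ q.2}) ω => A ω e.1.1 e.1.2) μ)
    (s : Finset {q : Fin n × Fin n // q.1 ≠ q.2}) :
    ∫ ω, ∏ e ∈ s, A ω e.1.1 e.1.2 ∂μ = ∏ e ∈ s, ∫ ω, A ω e.1.1 e.1.2 ∂μ := by
  classical
  set f : {q : Fin n × Fin n // q.1 ≠ q.2} → Ω → ℝ := fun e ω => A ω e.1.1 e.1.2 with hf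
  have hfm : ∀ e, Measurable (f e) := fun e => measA hA _ _
  induction s using Finset.induction_on with
  | empty => simp
  | @insert a s ha ih =>
      have hi : IndepFun (f a) (∏ e ∈ s, f e) μ :=
        (hind.indepFun_finsetProd_of_notMem hfm ha).symm
      have hpm : Measurable (∏ e ∈ s, f e) := by
        have hrw : (∏ e ∈ s, f e) = fun ω => ∏ e ∈ s, f e ω := by
          ext ω; simp [Finset.prod_apply]
        rw [hrw]
        exact Finset.measurable_prod s fun e _ => hfm e
      have key : ∫ ω, (f a * ∏ e ∈ s, f e) ω ∂μ
          = (∫ ω, f a ω ∂μ) * ∫ ω, (∏ e ∈ s, f e) ω ∂μ :=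
        hi.integral_mul_eq_mul_integral (hfm a).aestronglyMeasurable hpm.aestronglyMeasurable
      rw [Finset.prod_insert ha]
      have e1 : (∫ ω, ∏ e ∈ insert a s, f e ω ∂μ) = ∫ ω, (f a * ∏ e ∈ s, f e) ω ∂μ := by
        congr 1; ext ω
        rw [Finset.prod_insert ha]
        simp [Finset.prod_apply]
      calc ∫ ω, ∏ e ∈ insert a s, f e ω ∂μ
          = (∫ ω, f a ω ∂μ) * ∫ ω, (∏ e ∈ s, f e) ω ∂μ := by rw [e1, key]
        _ = (∫ ω, f a ω ∂μ) * ∫ ω, ∏ e ∈ s, f e ω ∂μ := by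
              congr 1; congr 1; ext ω; simp [Finset.prod_apply]
        _ = (∫ ω, f a ω ∂μ) * ∏ e ∈ s, ∫ ω, f e ω ∂μ := by rw [ih]

lemma integral_prod_offdiag (hA : Measurable A) (hp0 : 0 ≤ p)
    (hlaw : ∀ i j : Fin n, i ≠ j → Measure.map (fun ω => A ω i j) μ = bernoulliLaw p)
    (hind : iIndepFun
      (fun (e : {q : Fin n × Fin n // q.1 ≠ q.2}) ω => A ω e.1.1 e.1.2) μ)
    (s : Finset (Fin n × Fin n)) (hs : ∀ q ∈ s, q.1 ≠ q.2) :
    ∫ ω, ∏ q ∈ s, A ω q.1 q.2 ∂μ = p ^ s.card := by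
  classical
  set emb : {x // x ∈ s} ↪ {q : Fin n × Fin n // q.1 ≠ q.2} :=
    ⟨fun x => ⟨x.1, hs x.1 x.2⟩, by
      intro x y hxy
      simp only [Subtype.mk.injEq] at hxy
      exact Subtype.ext hxy⟩ with hemb
  set s' : Finset {q : Fin n × Fin n // q.1 ≠ q.2} := s.attach.map emb with hs'
  have hprod : ∀ ω, ∏ q ∈ s, A ω q.1 q.2 = ∏ e ∈ s', A ω e.1.1 e.1.2 := by
    intro ω
    rw [hs', Finset.prod_map, ← Finset.prod_attach s (fun q => A ω q.1 q.2)]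
    rfl
  have hcard : s'.card = s.card := by rw [hs', Finset.card_map, Finset.card_attach]
  calc ∫ ω, ∏ q ∈ s, A ω q.1 q.2 ∂μ = ∫ ω, ∏ e ∈ s', A ω e.1.1 e.1.2 ∂μ := by
        congr 1; ext ω; exact hprod ω
    _ = ∏ e ∈ s', ∫ ω, A ω e.1.1 e.1.2 ∂μ := integral_prod_edges hA hind s'
    _ = ∏ _e ∈ s', p := Finset.prod_congr rfl fun e _ => expec_entry hA hp0 hlaw e.2
    _ = p ^ s.card := by rw [Finset.prod_const, hcard]

end Prob

/-! #### The monomials -/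

/-- The monomial `A_{ki} A_{kj} A_{mi} A_{mj}` for `t = ((i,j),(k,m))`. -/
def Mon {Ω : Type} {n : ℕ} (A : Ω → Fin n → Fin n → ℝ)
    (t : (Fin n × Fin n) × (Fin n × Fin n)) (ω : Ω) : ℝ :=
  A ω t.2.1 t.1.1 * A ω t.2.1 t.1.2 * (A ω t.2.2 t.1.1 * A ω t.2.2 t.1.2)

/-- The edge set of the monomial. -/
def Et {n : ℕ} (t : (Fin n × Fin n) × (Fin n × Fin n)) : Finset (Fin n × Fin n) :=
  ({t.2.1, t.2.2} : Finset (Fin n)) ×ˢ ({t.1.1, t.1.2} : Finset (Fin n))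

lemma Et_eq {n : ℕ} (t : (Fin n × Fin n) × (Fin n × Fin n)) :
    Et t = insert (t.2.1, t.1.1) (insert (t.2.1, t.1.2)
      (insert (t.2.2, t.1.1) {(t.2.2, t.1.2)})) := by
  ext q
  simp only [Et, Finset.mem_product, Finset.mem_insert, Finset.mem_singleton, Prod.ext_iff]
  tauto

section MonLemmas

variable {Ω : Type} [MeasurableSpace Ω] {μ : Measure Ω} [IsProbabilityMeasure μ]
  {n : ℕ} {A : Ω → Fin n → Fin n → ℝ} {p : ℝ}

lemma Mon_eq_prod {ω : Ω} (hω : ∀ i j, A ω i j = 0 ∨ A ω i j = 1)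
    (t : (Fin n × Fin n) × (Fin n × Fin n)) :
    Mon A t ω = ∏ q ∈ Et t, A ω q.1 q.2 := by
  have hv : ∀ q : Fin n × Fin n, A ω q.1 q.2 = 0 ∨ A ω q.1 q.2 = 1 := fun q => hω q.1 q.2
  rw [Et_eq, prod_insert_idem (v := fun q : Fin n × Fin n => A ω q.1 q.2) hv,
    prod_insert_idem (v := fun q : Fin n × Fin n => A ω q.1 q.2) hv,
    prod_insert_idem (v := fun q : Fin n × Fin n => A ω q.1 q.2) hv, Finset.prod_singleton]
  unfold Mon
  ring

lemma Mon_mul_eq_prod {ω : Ω} (hω : ∀ i j, A ω i j = 0 ∨ A ω i j = 1)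
    (t t' : (Fin n × Fin n) × (Fin n × Fin n)) :
    Mon A t ω * Mon A t' ω = ∏ q ∈ Et t ∪ Et t', A ω q.1 q.2 := by
  have hv : ∀ q : Fin n × Fin n, A ω q.1 q.2 = 0 ∨ A ω q.1 q.2 = 1 := fun q => hω q.1 q.2
  rw [prod_union_idem (v := fun q : Fin n × Fin n => A ω q.1 q.2) hv,
    ← Mon_eq_prod hω t, ← Mon_eq_prod hω t']

lemma Mon_mem {ω : Ω} (hω : ∀ i j, A ω i j = 0 ∨ A ω i j = 1)
    (t : (Fin n × Fin n) × (Fin n × Fin n)) : Mon A t ω = 0 ∨ Mon A t ω = 1 := by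
  have hmul : ∀ x y : ℝ, (x = 0 ∨ x = 1) → (y = 0 ∨ y = 1) → (x * y = 0 ∨ x * y = 1) := by
    rintro x y (rfl | rfl) (rfl | rfl) <;> norm_num
  exact hmul _ _ (hmul _ _ (hω _ _) (hω _ _)) (hmul _ _ (hω _ _) (hω _ _))

lemma Mon_zero (hdiag : ∀ ω i, A ω i i = 0) {t : (Fin n × Fin n) × (Fin n × Fin n)}
    (h : ¬ (∀ q ∈ Et t, q.1 ≠ q.2)) (ω : Ω) : Mon A t ω = 0 := by
  push_neg at h
  obtain ⟨q, hq, hq2⟩ := h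
  rw [Et, Finset.mem_product] at hq
  obtain ⟨hq1, hq2'⟩ := hq
  rcases Finset.mem_insert.1 hq1 with h1 | h1 <;>
    rcases Finset.mem_insert.1 hq2' with h2 | h2
  · have e : t.2.1 = t.1.1 := by rw [← h1, hq2, h2]
    have hz : A ω t.2.1 t.1.1 = 0 := by rw [e]; exact hdiag ω _
    unfold Mon; rw [hz]; ring
  · have h2 : q.2 = t.1.2 := Finset.mem_singleton.1 h2
    have e : t.2.1 = t.1.2 := by rw [← h1, hq2, h2]
    have hz : A ω t.2.1 t.1.2 = 0 := by rw [e]; exact hdiag ω _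
    unfold Mon; rw [hz]; ring
  · have h1 : q.1 = t.2.2 := Finset.mem_singleton.1 h1
    have e : t.2.2 = t.1.1 := by rw [← h1, hq2, h2]
    have hz : A ω t.2.2 t.1.1 = 0 := by rw [e]; exact hdiag ω _
    unfold Mon; rw [hz]; ring
  · have h1 : q.1 = t.2.2 := Finset.mem_singleton.1 h1
    have h2 : q.2 = t.1.2 := Finset.mem_singleton.1 h2
    have e : t.2.2 = t.1.2 := by rw [← h1, hq2, h2]
    have hz : A ω t.2.2 t.1.2 = 0 := by rw [e]; exact hdiag ω _
    unfold Mon; rw [hz]; ring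

lemma Mon_measurable (hA : Measurable A) (t : (Fin n × Fin n) × (Fin n × Fin n)) :
    Measurable (Mon A t) :=
  ((measA hA _ _).mul (measA hA _ _)).mul ((measA hA _ _).mul (measA hA _ _))

omit [IsProbabilityMeasure μ] in
lemma Mon_ae_01 (hA : Measurable A) (hdiag : ∀ ω i, A ω i i = 0)
    (hlaw : ∀ i j : Fin n, i ≠ j → Measure.map (fun ω => A ω i j) μ = bernoulliLaw p)
    (t : (Fin n × Fin n) × (Fin n × Fin n)) :
    ∀ᵐ ω ∂μ, Mon A t ω = 0 ∨ Mon A t ω = 1 :=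
  (ae_nice hA hdiag hlaw).mono fun ω hω => Mon_mem hω t

lemma Mon_integrable (hA : Measurable A) (hdiag : ∀ ω i, A ω i i = 0)
    (hlaw : ∀ i j : Fin n, i ≠ j → Measure.map (fun ω => A ω i j) μ = bernoulliLaw p)
    (t : (Fin n × Fin n) × (Fin n × Fin n)) :
    Integrable (Mon A t) μ := by
  apply Integrable.mono' (integrable_const (1:ℝ)) (Mon_measurable hA t).aestronglyMeasurable
  filter_upwards [Mon_ae_01 hA hdiag hlaw t] with ω hω
  rcases hω with h | h <;> rw [h] <;> norm_num

lemma MonMul_integrable (hA : Measurable A) (hdiag : ∀ ω i, A ω i i = 0)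
    (hlaw : ∀ i j : Fin n, i ≠ j → Measure.map (fun ω => A ω i j) μ = bernoulliLaw p)
    (t t' : (Fin n × Fin n) × (Fin n × Fin n)) :
    Integrable (fun ω => Mon A t ω * Mon A t' ω) μ := by
  apply Integrable.mono' (integrable_const (1:ℝ))
    ((Mon_measurable hA t).mul (Mon_measurable hA t')).aestronglyMeasurable
  filter_upwards [Mon_ae_01 hA hdiag hlaw t, Mon_ae_01 hA hdiag hlaw t'] with ω h1 h2
  rcases h1 with h1 | h1 <;> rcases h2 with h2 | h2 <;> rw [Pi.mul_apply, h1, h2] <;> norm_num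

lemma EMon (hA : Measurable A) (hp0 : 0 ≤ p) (hdiag : ∀ ω i, A ω i i = 0)
    (hlaw : ∀ i j : Fin n, i ≠ j → Measure.map (fun ω => A ω i j) μ = bernoulliLaw p)
    (hind : iIndepFun
      (fun (e : {q : Fin n × Fin n // q.1 ≠ q.2}) ω => A ω e.1.1 e.1.2) μ)
    {t : (Fin n × Fin n) × (Fin n × Fin n)} (ht : ∀ q ∈ Et t, q.1 ≠ q.2) :
    ∫ ω, Mon A t ω ∂μ = p ^ (Et t).card := by
  have h1 : ∫ ω, Mon A t ω ∂μ = ∫ ω, ∏ q ∈ Et t, A ω q.1 q.2 ∂μ :=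
    integral_congr_ae ((ae_nice hA hdiag hlaw).mono fun ω hω => Mon_eq_prod hω t)
  rw [h1, integral_prod_offdiag hA hp0 hlaw hind (Et t) ht]

lemma EMonMul (hA : Measurable A) (hp0 : 0 ≤ p) (hdiag : ∀ ω i, A ω i i = 0)
    (hlaw : ∀ i j : Fin n, i ≠ j → Measure.map (fun ω => A ω i j) μ = bernoulliLaw p)
    (hind : iIndepFun
      (fun (e : {q : Fin n × Fin n // q.1 ≠ q.2}) ω => A ω e.1.1 e.1.2) μ)
    {t t' : (Fin n × Fin n) × (Fin n × Fin n)} (ht : ∀ q ∈ Et t, q.1 ≠ q.2)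
    (ht' : ∀ q ∈ Et t', q.1 ≠ q.2) :
    ∫ ω, Mon A t ω * Mon A t' ω ∂μ = p ^ (Et t ∪ Et t').card := by
  have h1 : ∫ ω, Mon A t ω * Mon A t' ω ∂μ = ∫ ω, ∏ q ∈ Et t ∪ Et t', A ω q.1 q.2 ∂μ :=
    integral_congr_ae ((ae_nice hA hdiag hlaw).mono fun ω hω => Mon_mul_eq_prod hω t t')
  rw [h1]
  apply integral_prod_offdiag hA hp0 hlaw hind
  intro q hq
  rcases Finset.mem_union.1 hq with h | h
  · exact ht q h
  · exact ht' q h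

/-- The key per-pair covariance bound. -/
lemma pair_bound (hA : Measurable A) (hp0 : 0 ≤ p) (hp1 : p ≤ 1)
    (hdiag : ∀ ω i, A ω i i = 0)
    (hlaw : ∀ i j : Fin n, i ≠ j → Measure.map (fun ω => A ω i j) μ = bernoulliLaw p)
    (hind : iIndepFun
      (fun (e : {q : Fin n × Fin n // q.1 ≠ q.2}) ω => A ω e.1.1 e.1.2) μ)
    (t t' : (Fin n × Fin n) × (Fin n × Fin n)) :
    (∫ ω, Mon A t ω * Mon A t' ω ∂μ) - (∫ ω, Mon A t ω ∂μ) * (∫ ω, Mon A t' ω ∂μ)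
      ≤ p ^ (Et t).card * (wfun p {t.1.1, t.1.2} t'.1.1 t'.1.2
          * wfun p {t.2.1, t.2.2} t'.2.1 t'.2.2) := by
  classical
  have hwc := wfun_nonneg hp0 ({t.1.1, t.1.2} : Finset (Fin n)) t'.1.1 t'.1.2
  have hwr := wfun_nonneg hp0 ({t.2.1, t.2.2} : Finset (Fin n)) t'.2.1 t'.2.2
  have hRHS0 : 0 ≤ p ^ (Et t).card * (wfun p {t.1.1, t.1.2} t'.1.1 t'.1.2
      * wfun p {t.2.1, t.2.2} t'.2.1 t'.2.2) :=
    mul_nonneg (pow_nonneg hp0 _) (mul_nonneg hwc hwr)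
  by_cases ht : ∀ q ∈ Et t, q.1 ≠ q.2
  swap
  · have hz : ∀ ω, Mon A t ω = 0 := Mon_zero hdiag ht
    have h1 : ∫ ω, Mon A t ω * Mon A t' ω ∂μ = 0 := by
      have : ∀ ω, Mon A t ω * Mon A t' ω = 0 := fun ω => by rw [hz ω]; ring
      simp [this]
    have h2 : ∫ ω, Mon A t ω ∂μ = 0 := by simp [hz]
    rw [h1, h2]
    simpa using hRHS0
  by_cases ht' : ∀ q ∈ Et t', q.1 ≠ q.2
  swap
  · have hz : ∀ ω, Mon A t' ω = 0 := Mon_zero hdiag ht'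
    have h1 : ∫ ω, Mon A t ω * Mon A t' ω ∂μ = 0 := by
      have : ∀ ω, Mon A t ω * Mon A t' ω = 0 := fun ω => by rw [hz ω]; ring
      simp [this]
    have h2 : ∫ ω, Mon A t' ω ∂μ = 0 := by simp [hz]
    rw [h1, h2]
    simpa using hRHS0
  rw [EMonMul hA hp0 hdiag hlaw hind ht ht', EMon hA hp0 hdiag hlaw hind ht,
    EMon hA hp0 hdiag hlaw hind ht']
  by_cases hcap : ((Et t) ∩ (Et t')).Nonempty
  · -- intersecting case
    have hcol : t'.1.1 ∈ ({t.1.1, t.1.2} : Finset (Fin n))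
        ∨ t'.1.2 ∈ ({t.1.1, t.1.2} : Finset (Fin n)) := by
      obtain ⟨q, hq⟩ := hcap
      rw [Finset.mem_inter] at hq
      have hq1 := hq.1
      have hq2 := hq.2
      rw [Et, Finset.mem_product] at hq1 hq2
      rcases Finset.mem_insert.1 hq2.2 with h | h
      · left; rw [← h]; exact hq1.2
      · right; rw [← Finset.mem_singleton.1 h]; exact hq1.2
    have hrow : t'.2.1 ∈ ({t.2.1, t.2.2} : Finset (Fin n))
        ∨ t'.2.2 ∈ ({t.2.1, t.2.2} : Finset (Fin n)) := by
      obtain ⟨q, hq⟩ := hcap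
      rw [Finset.mem_inter] at hq
      have hq1 := hq.1
      have hq2 := hq.2
      rw [Et, Finset.mem_product] at hq1 hq2
      rcases Finset.mem_insert.1 hq2.1 with h | h
      · left; rw [← h]; exact hq1.1
      · right; rw [← Finset.mem_singleton.1 h]; exact hq1.1
    have hcards := card_union_ge ({t.2.1, t.2.2} : Finset (Fin n)) {t.1.1, t.1.2}
      {t'.2.1, t'.2.2} {t'.1.1, t'.1.2} hcap
    have hpowle : p ^ (Et t ∪ Et t').card
        ≤ p ^ ((Et t).card
            + (if ({t'.1.1, t'.1.2} : Finset (Fin n)) ⊆ {t.1.1, t.1.2} then 0 else 1)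
            + (if ({t'.2.1, t'.2.2} : Finset (Fin n)) ⊆ {t.2.1, t.2.2} then 0 else 1)) :=
      pow_le_pow_of_le_one hp0 hp1 hcards
    have hsplit : p ^ ((Et t).card
            + (if ({t'.1.1, t'.1.2} : Finset (Fin n)) ⊆ {t.1.1, t.1.2} then 0 else 1)
            + (if ({t'.2.1, t'.2.2} : Finset (Fin n)) ⊆ {t.2.1, t.2.2} then 0 else 1))
        = p ^ (Et t).card
          * (p ^ (if ({t'.1.1, t'.1.2} : Finset (Fin n)) ⊆ {t.1.1, t.1.2} then 0 else 1)
          * p ^ (if ({t'.2.1, t'.2.2} : Finset (Fin n)) ⊆ {t.2.1, t.2.2} then 0 else 1)) := by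
      rw [pow_add, pow_add]; ring
    have hfinal : p ^ (Et t ∪ Et t').card
        ≤ p ^ (Et t).card * (wfun p {t.1.1, t.1.2} t'.1.1 t'.1.2
            * wfun p {t.2.1, t.2.2} t'.2.1 t'.2.2) := by
      refine le_trans hpowle (le_trans (le_of_eq hsplit) ?_)
      apply mul_le_mul_of_nonneg_left _ (pow_nonneg hp0 _)
      apply mul_le_mul (pow_le_wfun hp0 hcol) (pow_le_wfun hp0 hrow)
        (pow_nonneg hp0 _) hwc
    have hsub : 0 ≤ p ^ (Et t).card * p ^ (Et t').card :=
      mul_nonneg (pow_nonneg hp0 _) (pow_nonneg hp0 _)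
    linarith
  · -- disjoint case: covariance vanishes
    have hdisj : Disjoint (Et t) (Et t') := by
      rw [Finset.disjoint_iff_inter_eq_empty]
      exact Finset.not_nonempty_iff_eq_empty.1 hcap
    rw [Finset.card_union_of_disjoint hdisj, pow_add]
    simpa using hRHS0

end MonLemmas

lemma sigma_bound {n : ℕ} {p : ℝ} (hp0 : 0 ≤ p) :
    ∑ t : (Fin n × Fin n) × (Fin n × Fin n), p ^ (Et t).card
      ≤ (n:ℝ)^2 * p + 2*(n:ℝ)^3 * p^2 + (n:ℝ)^4 * p^4 := by
  have hcard : ∀ t : (Fin n × Fin n) × (Fin n × Fin n),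
      (Et t).card = ({t.2.1, t.2.2} : Finset (Fin n)).card
        * ({t.1.1, t.1.2} : Finset (Fin n)).card := fun t => Finset.card_product _ _
  have step1 : ∀ c : Fin n × Fin n,
      ∑ r : Fin n × Fin n, p ^ (Et (c, r)).card
        ≤ (n:ℝ) * p ^ ({c.1, c.2} : Finset (Fin n)).card
          + (n:ℝ)^2 * (p ^ ({c.1, c.2} : Finset (Fin n)).card)^2 := by
    intro c
    set q := p ^ ({c.1, c.2} : Finset (Fin n)).card with hq
    have hq0 : 0 ≤ q := pow_nonneg hp0 _
    have hterm : ∀ r : Fin n × Fin n,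
        p ^ (Et (c, r)).card = q ^ ({r.1, r.2} : Finset (Fin n)).card := by
      intro r
      rw [hcard (c, r), hq, pow_mul']
    rw [Finset.sum_congr rfl fun r _ => hterm r]
    have := sum_pow_card_pair (n := n) hq0
    rw [Fintype.sum_prod_type]
    exact this
  have houter1 : ∑ c : Fin n × Fin n, p ^ ({c.1, c.2} : Finset (Fin n)).card
      ≤ (n:ℝ)*p + (n:ℝ)^2*p^2 := by
    rw [Fintype.sum_prod_type]
    exact sum_pow_card_pair hp0
  have houter2 : ∑ c : Fin n × Fin n, (p ^ ({c.1, c.2} : Finset (Fin n)).card)^2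
      ≤ (n:ℝ)*p^2 + (n:ℝ)^2*(p^2)^2 := by
    have hterm : ∀ c : Fin n × Fin n,
        (p ^ ({c.1, c.2} : Finset (Fin n)).card)^2
          = (p^2) ^ ({c.1, c.2} : Finset (Fin n)).card := by
      intro c
      rw [← pow_mul, ← pow_mul']
    rw [Finset.sum_congr rfl fun c _ => hterm c, Fintype.sum_prod_type]
    exact sum_pow_card_pair (by positivity)
  calc ∑ t : (Fin n × Fin n) × (Fin n × Fin n), p ^ (Et t).card
      = ∑ c : Fin n × Fin n, ∑ r : Fin n × Fin n, p ^ (Et (c, r)).card := by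
        rw [Fintype.sum_prod_type]
    _ ≤ ∑ c : Fin n × Fin n, ((n:ℝ) * p ^ ({c.1, c.2} : Finset (Fin n)).card
          + (n:ℝ)^2 * (p ^ ({c.1, c.2} : Finset (Fin n)).card)^2) :=
        Finset.sum_le_sum fun c _ => step1 c
    _ = (n:ℝ) * (∑ c : Fin n × Fin n, p ^ ({c.1, c.2} : Finset (Fin n)).card)
          + (n:ℝ)^2 * ∑ c : Fin n × Fin n, (p ^ ({c.1, c.2} : Finset (Fin n)).card)^2 := by
        rw [Finset.sum_add_distrib, ← Finset.mul_sum, ← Finset.mul_sum]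
    _ ≤ (n:ℝ) * ((n:ℝ)*p + (n:ℝ)^2*p^2) + (n:ℝ)^2 * ((n:ℝ)*p^2 + (n:ℝ)^2*(p^2)^2) := by
        apply add_le_add
        · exact mul_le_mul_of_nonneg_left houter1 (by positivity)
        · exact mul_le_mul_of_nonneg_left houter2 (by positivity)
    _ ≤ (n:ℝ)^2 * p + 2*(n:ℝ)^3 * p^2 + (n:ℝ)^4 * p^4 := by ring_nf; nlinarith [sq_nonneg p]


end Stmt19Aux

set_option maxHeartbeats 1600000 in
/-- mean and variance of the squared Frobenius norm of `A*ᵀA*`. -/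
theorem stmt19 :
    ∃ C : ℝ, 0 < C ∧
      ∀ (n : ℕ), 2 ≤ n → ∀ (p : ℝ), p ∈ Set.Ico (1 / (n : ℝ)) 1 → C ≤ (n : ℝ) * p →
      ∀ (Ω : Type) (_ : MeasurableSpace Ω) (μ : Measure Ω), IsProbabilityMeasure μ →
      ∀ (A : Ω → Fin n → Fin n → ℝ), IsER μ A p → Measurable A →
      (∫ ω, frobSq ((normAdj (A ω) p)ᵀ * normAdj (A ω) p) ∂μ ≤
          C * ((n : ℝ) + (n : ℝ) ^ 2 * p ^ 2)) ∧
      variance (fun ω => frobSq ((normAdj (A ω) p)ᵀ * normAdj (A ω) p)) μ ≤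
          C * ((n : ℝ) + (n : ℝ) ^ 2 * p ^ 2 + (n : ℝ) ^ 3 * p ^ 4) := by
  classical
  refine ⟨6912, by norm_num, ?_⟩
  intro n hn p hp hCnp Ω mΩ μ hμ A hER hA
  obtain ⟨hdiag, hlaw, hind⟩ := hER
  -- basic numeric facts
  have hn2 : (2:ℝ) ≤ (n:ℝ) := by exact_mod_cast hn
  have hn0 : (0:ℝ) < n := by linarith
  have hp1 : p ≤ 1 := le_of_lt hp.2
  have hp0 : 0 < p := lt_of_lt_of_le (by positivity) hp.1
  have hnp1 : (1:ℝ) ≤ (n:ℝ) * p := le_trans (by norm_num) hCnp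
  have hn1 : (1:ℝ) ≤ (n:ℝ) - 1 := by linarith
  have hd0 : (0:ℝ) < ((n:ℝ) - 1) * p := by nlinarith
  have hnn : (0:ℝ) ≤ ((n:ℝ) - 1) * p := le_of_lt hd0
  set cfac : ℝ := ((((n:ℝ) - 1) * p) ^ 2)⁻¹ with hcfac
  have hcfac0 : 0 < cfac := by rw [hcfac]; exact inv_pos.2 (pow_pos hd0 2)
  set N2 : ℝ := (n:ℝ)^2 * p^2 with hN2
  have hN20 : 0 < N2 := by rw [hN2]; positivity
  have hkey : cfac * N2 ≤ 4 := by
    have h1 : N2 ≤ 4 * (((n:ℝ) - 1) * p) ^ 2 := by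
      rw [hN2]; nlinarith [sq_nonneg p, sq_nonneg ((n:ℝ) - 2)]
    calc cfac * N2 ≤ cfac * (4 * (((n:ℝ) - 1) * p) ^ 2) :=
          mul_le_mul_of_nonneg_left h1 (le_of_lt hcfac0)
      _ = 4 := by
          rw [hcfac]
          field_simp
  -- the expansion of the Frobenius norm
  set Y : Ω → ℝ := fun ω => cfac * ∑ t : (Fin n × Fin n) × (Fin n × Fin n), Stmt19Aux.Mon A t ω with hY
  have hsqrt : Real.sqrt (((n:ℝ) - 1) * p) * Real.sqrt (((n:ℝ) - 1) * p)
      = ((n:ℝ) - 1) * p := Real.mul_self_sqrt hnn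
  have Yexp : ∀ ω, frobSq ((normAdj (A ω) p)ᵀ * normAdj (A ω) p) = Y ω := by
    intro ω
    have hentry : ∀ i j : Fin n, ((normAdj (A ω) p)ᵀ * normAdj (A ω) p) i j
        = (∑ k, A ω k i * A ω k j) / (((n:ℝ) - 1) * p) := by
      intro i j
      rw [Matrix.mul_apply, Finset.sum_div]
      apply Finset.sum_congr rfl
      intro k _
      rw [Matrix.transpose_apply]
      show normAdj (A ω) p k i * normAdj (A ω) p k j = _
      unfold normAdj
      simp only [Matrix.of_apply]
      rw [div_mul_div_comm, hsqrt]
    have hsq : ∀ i j : Fin n, (((normAdj (A ω) p)ᵀ * normAdj (A ω) p) i j) ^ 2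
        = cfac * ∑ k, ∑ m, Stmt19Aux.Mon A ((i, j), (k, m)) ω := by
      intro i j
      rw [hentry i j, div_pow, div_eq_mul_inv, ← hcfac, pow_two, Finset.sum_mul_sum,
        mul_comm]
      rfl
    unfold frobSq
    rw [hY]
    calc ∑ i, ∑ j, (((normAdj (A ω) p)ᵀ * normAdj (A ω) p) i j) ^ 2
        = ∑ i, ∑ j, cfac * ∑ k, ∑ m, Stmt19Aux.Mon A ((i, j), (k, m)) ω := by
          apply Finset.sum_congr rfl; intro i _
          apply Finset.sum_congr rfl; intro j _
          exact hsq i j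
      _ = cfac * ∑ t : (Fin n × Fin n) × (Fin n × Fin n), Stmt19Aux.Mon A t ω := by
          simp_rw [Fintype.sum_prod_type, Finset.mul_sum]
  -- expectations of monomials
  have hMint : ∀ t : (Fin n × Fin n) × (Fin n × Fin n), Integrable (Stmt19Aux.Mon A t) μ :=
    fun t => Stmt19Aux.Mon_integrable hA hdiag hlaw t
  have hMMint : ∀ t t' : (Fin n × Fin n) × (Fin n × Fin n),
      Integrable (fun ω => Stmt19Aux.Mon A t ω * Stmt19Aux.Mon A t' ω) μ :=
    fun t t' => Stmt19Aux.MonMul_integrable hA hdiag hlaw t t'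
  have hEY : ∫ ω, Y ω ∂μ
      = cfac * ∑ t : (Fin n × Fin n) × (Fin n × Fin n), ∫ ω, Stmt19Aux.Mon A t ω ∂μ := by
    rw [hY]
    rw [MeasureTheory.integral_const_mul, MeasureTheory.integral_finset_sum _ fun t _ => hMint t]
  have hEsum_le : ∑ t : (Fin n × Fin n) × (Fin n × Fin n), ∫ ω, Stmt19Aux.Mon A t ω ∂μ
      ≤ ∑ t : (Fin n × Fin n) × (Fin n × Fin n), p ^ (Stmt19Aux.Et t).card := by
    apply Finset.sum_le_sum
    intro t _
    by_cases ht : ∀ q ∈ Stmt19Aux.Et t, q.1 ≠ q.2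
    · rw [Stmt19Aux.EMon hA hp0.le hdiag hlaw hind ht]
    · have hz : ∀ ω, Stmt19Aux.Mon A t ω = 0 := Stmt19Aux.Mon_zero hdiag ht
      have : ∫ ω, Stmt19Aux.Mon A t ω ∂μ = 0 := by simp [hz]
      rw [this]
      positivity
  have hsig := Stmt19Aux.sigma_bound (n := n) (p := p) hp0.le
  have hB3 : (n:ℝ)^2 * p + 2*(n:ℝ)^3 * p^2 + (n:ℝ)^4 * p^4 ≤ 3 * N2 * ((n:ℝ) + N2) := by
    rw [hN2]
    have h1 : (n:ℝ)^2 * p * 1 ≤ (n:ℝ)^2 * p * ((n:ℝ) * p) :=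
      mul_le_mul_of_nonneg_left hnp1 (by positivity)
    nlinarith [h1, pow_nonneg hp0.le 2, pow_nonneg hn0.le 4, sq_nonneg ((n:ℝ)^2*p^2)]
  have hsum_le : ∑ t : (Fin n × Fin n) × (Fin n × Fin n), ∫ ω, Stmt19Aux.Mon A t ω ∂μ
      ≤ 3 * N2 * ((n:ℝ) + N2) := le_trans hEsum_le (le_trans hsig hB3)
  have hnN2 : (0:ℝ) ≤ (n:ℝ) + N2 := by positivity
  -- mean bound
  have hmean : ∫ ω, Y ω ∂μ ≤ 6912 * ((n:ℝ) + N2) := by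
    rw [hEY]
    calc cfac * ∑ t : (Fin n × Fin n) × (Fin n × Fin n), ∫ ω, Stmt19Aux.Mon A t ω ∂μ
        ≤ cfac * (3 * N2 * ((n:ℝ) + N2)) := mul_le_mul_of_nonneg_left hsum_le hcfac0.le
      _ = 3 * (cfac * N2) * ((n:ℝ) + N2) := by ring
      _ ≤ 3 * 4 * ((n:ℝ) + N2) := by
          apply mul_le_mul_of_nonneg_right _ hnN2
          nlinarith
      _ ≤ 6912 * ((n:ℝ) + N2) := by nlinarith
  -- measurability and boundedness of Y
  have hYmeas : Measurable Y := by
    rw [hY]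
    exact measurable_const.mul
      (Finset.measurable_sum Finset.univ fun t _ => Stmt19Aux.Mon_measurable hA t)
  have hcardTT : ((Finset.univ : Finset ((Fin n × Fin n) × (Fin n × Fin n))).card : ℝ)
      = (Fintype.card ((Fin n × Fin n) × (Fin n × Fin n)) : ℝ) := by
    rw [Finset.card_univ]
  have hYbdd : ∀ᵐ ω ∂μ, ‖Y ω‖
      ≤ cfac * (Fintype.card ((Fin n × Fin n) × (Fin n × Fin n)) : ℝ) := by
    filter_upwards [Stmt19Aux.ae_nice hA hdiag hlaw] with ω hω
    rw [hY]
    simp only [Real.norm_eq_abs, abs_mul, abs_of_pos hcfac0]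
    apply mul_le_mul_of_nonneg_left _ hcfac0.le
    calc |∑ t : (Fin n × Fin n) × (Fin n × Fin n), Stmt19Aux.Mon A t ω|
        ≤ ∑ t : (Fin n × Fin n) × (Fin n × Fin n), |Stmt19Aux.Mon A t ω| :=
          Finset.abs_sum_le_sum_abs _ _
      _ ≤ ∑ _t : (Fin n × Fin n) × (Fin n × Fin n), (1:ℝ) := by
          apply Finset.sum_le_sum
          intro t _
          rcases Stmt19Aux.Mon_mem hω t with h | h <;> rw [h] <;> norm_num
      _ = (Fintype.card ((Fin n × Fin n) × (Fin n × Fin n)) : ℝ) := by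
          rw [Finset.sum_const, nsmul_eq_mul, mul_one, hcardTT]
  have hY2 : MeasureTheory.MemLp Y 2 μ :=
    MeasureTheory.MemLp.of_bound hYmeas.aestronglyMeasurable _ hYbdd
  -- variance identity
  have hYsqfun : (Y ^ 2 : Ω → ℝ) = fun ω => cfac ^ 2
      * ∑ t : (Fin n × Fin n) × (Fin n × Fin n),
          ∑ t' : (Fin n × Fin n) × (Fin n × Fin n),
            Stmt19Aux.Mon A t ω * Stmt19Aux.Mon A t' ω := by
    ext ω
    simp only [Pi.pow_apply, hY]
    rw [mul_pow, pow_two (∑ t : (Fin n × Fin n) × (Fin n × Fin n), Stmt19Aux.Mon A t ω),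
      Finset.sum_mul_sum]
  have hEYsq : ∫ ω, (Y ^ 2 : Ω → ℝ) ω ∂μ = cfac ^ 2
      * ∑ t : (Fin n × Fin n) × (Fin n × Fin n),
          ∑ t' : (Fin n × Fin n) × (Fin n × Fin n),
            ∫ ω, Stmt19Aux.Mon A t ω * Stmt19Aux.Mon A t' ω ∂μ := by
    rw [hYsqfun]
    rw [MeasureTheory.integral_const_mul]
    rw [MeasureTheory.integral_finset_sum _ fun t _ =>
      MeasureTheory.integrable_finset_sum _ fun t' _ => hMMint t t']
    congr 1
    apply Finset.sum_congr rfl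
    intro t _
    rw [MeasureTheory.integral_finset_sum _ fun t' _ => hMMint t t']
  have hvar : variance Y μ = cfac ^ 2
      * ∑ t : (Fin n × Fin n) × (Fin n × Fin n),
          ∑ t' : (Fin n × Fin n) × (Fin n × Fin n),
            ((∫ ω, Stmt19Aux.Mon A t ω * Stmt19Aux.Mon A t' ω ∂μ)
              - (∫ ω, Stmt19Aux.Mon A t ω ∂μ) * (∫ ω, Stmt19Aux.Mon A t' ω ∂μ)) := by
    rw [ProbabilityTheory.variance_eq_sub hY2]
    have h2 : (μ[Y]) ^ 2 = cfac ^ 2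
        * ∑ t : (Fin n × Fin n) × (Fin n × Fin n),
            ∑ t' : (Fin n × Fin n) × (Fin n × Fin n),
              (∫ ω, Stmt19Aux.Mon A t ω ∂μ) * (∫ ω, Stmt19Aux.Mon A t' ω ∂μ) := by
      have : μ[Y] = ∫ ω, Y ω ∂μ := rfl
      rw [this, hEY, mul_pow,
        pow_two (∑ t : (Fin n × Fin n) × (Fin n × Fin n), ∫ ω, Stmt19Aux.Mon A t ω ∂μ),
        Finset.sum_mul_sum]
    have h1 : μ[Y ^ 2] = ∫ ω, (Y ^ 2 : Ω → ℝ) ω ∂μ := rfl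
    rw [h1, hEYsq, h2, ← mul_sub]
    congr 1
    rw [← Finset.sum_sub_distrib]
    apply Finset.sum_congr rfl
    intro t _
    rw [← Finset.sum_sub_distrib]
  -- bound the variance sum
  have hwcard : ∀ a b : Fin n, ({a, b} : Finset (Fin n)).card ≤ 2 := by
    intro a b
    calc ({a, b} : Finset (Fin n)).card ≤ ({b} : Finset (Fin n)).card + 1 :=
          Finset.card_insert_le a {b}
      _ = 2 := by rw [Finset.card_singleton]
  have hwsum : ∀ C : Finset (Fin n), C.card ≤ 2 →
      ∑ c' : Fin n × Fin n, Stmt19Aux.wfun p C c'.1 c'.2 ≤ 12 * (n:ℝ) * p := by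
    intro C hC
    rw [Fintype.sum_prod_type]
    exact Stmt19Aux.sum_wfun_le hp0.le hnp1 hC
  have hwsum_nonneg : ∀ C : Finset (Fin n),
      0 ≤ ∑ c' : Fin n × Fin n, Stmt19Aux.wfun p C c'.1 c'.2 := by
    intro C
    apply Finset.sum_nonneg
    intro c' _
    exact Stmt19Aux.wfun_nonneg hp0.le C c'.1 c'.2
  have hinner : ∀ t : (Fin n × Fin n) × (Fin n × Fin n),
      ∑ t' : (Fin n × Fin n) × (Fin n × Fin n),
        ((∫ ω, Stmt19Aux.Mon A t ω * Stmt19Aux.Mon A t' ω ∂μ)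
          - (∫ ω, Stmt19Aux.Mon A t ω ∂μ) * (∫ ω, Stmt19Aux.Mon A t' ω ∂μ))
      ≤ p ^ (Stmt19Aux.Et t).card * (144 * N2) := by
    intro t
    have hstep : ∑ t' : (Fin n × Fin n) × (Fin n × Fin n),
        ((∫ ω, Stmt19Aux.Mon A t ω * Stmt19Aux.Mon A t' ω ∂μ)
          - (∫ ω, Stmt19Aux.Mon A t ω ∂μ) * (∫ ω, Stmt19Aux.Mon A t' ω ∂μ))
        ≤ ∑ t' : (Fin n × Fin n) × (Fin n × Fin n),
            p ^ (Stmt19Aux.Et t).card * (Stmt19Aux.wfun p {t.1.1, t.1.2} t'.1.1 t'.1.2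
              * Stmt19Aux.wfun p {t.2.1, t.2.2} t'.2.1 t'.2.2) :=
      Finset.sum_le_sum fun t' _ =>
        Stmt19Aux.pair_bound hA hp0.le hp1 hdiag hlaw hind t t'
    have hfact : ∑ t' : (Fin n × Fin n) × (Fin n × Fin n),
        p ^ (Stmt19Aux.Et t).card * (Stmt19Aux.wfun p {t.1.1, t.1.2} t'.1.1 t'.1.2
          * Stmt19Aux.wfun p {t.2.1, t.2.2} t'.2.1 t'.2.2)
        = p ^ (Stmt19Aux.Et t).card
          * ((∑ c' : Fin n × Fin n, Stmt19Aux.wfun p {t.1.1, t.1.2} c'.1 c'.2)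
            * (∑ r' : Fin n × Fin n, Stmt19Aux.wfun p {t.2.1, t.2.2} r'.1 r'.2)) := by
      rw [Finset.sum_mul_sum, Finset.mul_sum, Fintype.sum_prod_type]
      apply Finset.sum_congr rfl
      intro c' _
      rw [Finset.mul_sum]
    have hprodle : (∑ c' : Fin n × Fin n, Stmt19Aux.wfun p {t.1.1, t.1.2} c'.1 c'.2)
        * (∑ r' : Fin n × Fin n, Stmt19Aux.wfun p {t.2.1, t.2.2} r'.1 r'.2)
        ≤ (12 * (n:ℝ) * p) * (12 * (n:ℝ) * p) := by
      apply mul_le_mul (hwsum _ (hwcard _ _)) (hwsum _ (hwcard _ _)) (hwsum_nonneg _)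
      positivity
    have h144 : (12 * (n:ℝ) * p) * (12 * (n:ℝ) * p) = 144 * N2 := by rw [hN2]; ring
    calc ∑ t' : (Fin n × Fin n) × (Fin n × Fin n),
        ((∫ ω, Stmt19Aux.Mon A t ω * Stmt19Aux.Mon A t' ω ∂μ)
          - (∫ ω, Stmt19Aux.Mon A t ω ∂μ) * (∫ ω, Stmt19Aux.Mon A t' ω ∂μ))
        ≤ p ^ (Stmt19Aux.Et t).card
          * ((∑ c' : Fin n × Fin n, Stmt19Aux.wfun p {t.1.1, t.1.2} c'.1 c'.2)
            * (∑ r' : Fin n × Fin n, Stmt19Aux.wfun p {t.2.1, t.2.2} r'.1 r'.2)) := by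
          rw [← hfact]; exact hstep
      _ ≤ p ^ (Stmt19Aux.Et t).card * (144 * N2) := by
          rw [← h144]
          exact mul_le_mul_of_nonneg_left hprodle (pow_nonneg hp0.le _)
  have hvarle : variance Y μ ≤ cfac ^ 2 * (3 * N2 * ((n:ℝ) + N2) * (144 * N2)) := by
    rw [hvar]
    apply mul_le_mul_of_nonneg_left _ (by positivity)
    calc ∑ t : (Fin n × Fin n) × (Fin n × Fin n),
        ∑ t' : (Fin n × Fin n) × (Fin n × Fin n),
          ((∫ ω, Stmt19Aux.Mon A t ω * Stmt19Aux.Mon A t' ω ∂μ)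
            - (∫ ω, Stmt19Aux.Mon A t ω ∂μ) * (∫ ω, Stmt19Aux.Mon A t' ω ∂μ))
        ≤ ∑ t : (Fin n × Fin n) × (Fin n × Fin n),
            p ^ (Stmt19Aux.Et t).card * (144 * N2) :=
          Finset.sum_le_sum fun t _ => hinner t
      _ = (∑ t : (Fin n × Fin n) × (Fin n × Fin n), p ^ (Stmt19Aux.Et t).card)
            * (144 * N2) := by rw [Finset.sum_mul]
      _ ≤ (3 * N2 * ((n:ℝ) + N2)) * (144 * N2) := by
          apply mul_le_mul_of_nonneg_right (le_trans hsig hB3) (by positivity)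
      _ = 3 * N2 * ((n:ℝ) + N2) * (144 * N2) := by ring
  have hvarfinal : variance Y μ ≤ 6912 * ((n:ℝ) + N2) := by
    calc variance Y μ ≤ cfac ^ 2 * (3 * N2 * ((n:ℝ) + N2) * (144 * N2)) := hvarle
      _ = 432 * (cfac * N2) ^ 2 * ((n:ℝ) + N2) := by ring
      _ ≤ 432 * 16 * ((n:ℝ) + N2) := by
          have h0 : 0 ≤ cfac * N2 := mul_nonneg hcfac0.le hN20.le
          have hsq : (cfac * N2) ^ 2 ≤ 16 := by nlinarith
          nlinarith [mul_le_mul_of_nonneg_right hsq hnN2]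
      _ = 6912 * ((n:ℝ) + N2) := by norm_num
  -- conclude
  have hfun : (fun ω => frobSq ((normAdj (A ω) p)ᵀ * normAdj (A ω) p)) = Y := funext Yexp
  constructor
  · calc ∫ ω, frobSq ((normAdj (A ω) p)ᵀ * normAdj (A ω) p) ∂μ
        = ∫ ω, Y ω ∂μ := by rw [hfun]
      _ ≤ 6912 * ((n:ℝ) + N2) := hmean
      _ = 6912 * ((n:ℝ) + (n:ℝ)^2 * p^2) := by rw [hN2]
  · calc variance (fun ω => frobSq ((normAdj (A ω) p)ᵀ * normAdj (A ω) p)) μ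
        = variance Y μ := by rw [hfun]
      _ ≤ 6912 * ((n:ℝ) + N2) := hvarfinal
      _ ≤ 6912 * ((n:ℝ) + (n:ℝ)^2 * p^2 + (n:ℝ)^3 * p^4) := by
          rw [hN2]
          nlinarith [hp0.le, hn0.le, pow_nonneg hp0.le 4, pow_pos hn0 3]

end
end
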